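/- arXiv:math/9908029 — 4 statements merged into one kernel-verified Lean document; each statement's English description precedes it below -/
import Mathlib

section
/- The map T ↦ k(T) is a bijection from the set of plane binary trees with n internal vertices to the set K_n = {k ∈ ℕ^n : ∑_{i≤j} k_i ≥ j for all 1 ≤ j ≤ n−1, ∑_{i=1}^n k_i = n}. -/
open Finset

/-- Plane binary trees: each vertex has zero or two ordered children. -/
inductive PBT where
  | leaf : PBT
  | node : PBT → PBT → PBT

/-- The number of internal vertices of a plane binary tree. -/
def PBT.internals : PBT → ℕ
  | .leaf => 0
  | .node l r => l.internals + r.internals + 1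

/-- Increment the head of a list. -/
def incHead : List ℕ → List ℕ
  | [] => []
  | a :: t => (a + 1) :: t

/-- The sequence `k(T) = (k_1,…,k_n)` of a plane binary tree `T`, listed in the order of
the binary search labeling of its internal vertices: `k_i = 0` if the left child of
vertex `i` is internal, and otherwise `k_i` is the length of the maximal chain
`i = j_1 < ⋯ < j_r` of internal vertices with `j_h` the left child of `j_{h+1}`. -/
def PBT.kSeq : PBT → List ℕ
  | .leaf => []
  | .node l r => incHead (l.kSeq ++ [0]) ++ r.kSeq

namespace PBTaux

lemma length_incHead (l : List ℕ) : (incHead l).length = l.length := by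
  cases l <;> simp [incHead]

lemma sum_incHead (l : List ℕ) (h : l ≠ []) : (incHead l).sum = l.sum + 1 := by
  cases l with
  | nil => simp at h
  | cons a t => simp [incHead]; ring

lemma take_incHead (l : List ℕ) (j : ℕ) (hj : 0 < j) :
    (incHead l).take j = incHead (l.take j) := by
  cases l with
  | nil => simp [incHead]
  | cons a t =>
    obtain ⟨j, rfl⟩ := Nat.exists_eq_add_of_lt hj
    simp [incHead]

lemma sum_take_append_zero (l : List ℕ) (j : ℕ) :
    ((l ++ [0]).take j).sum = (l.take j).sum := by
  rw [List.take_append, List.sum_append]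
  have : ((List.take (j - l.length) [0]).sum) = 0 := by
    generalize (j - l.length) = t
    cases t with
    | zero => simp
    | succ m => simp
  omega

lemma length_kSeq (t : PBT) : t.kSeq.length = t.internals := by
  induction t with
  | leaf => rfl
  | node l r ihl ihr =>
    simp [PBT.kSeq, PBT.internals, length_incHead, ihl, ihr]; omega

lemma sum_kSeq (t : PBT) : t.kSeq.sum = t.internals := by
  induction t with
  | leaf => rfl
  | node l r ihl ihr =>
    simp only [PBT.kSeq, PBT.internals, List.sum_append]
    rw [sum_incHead _ (by simp)]
    simp [ihl, ihr]; omega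

/-- prefix sums inside the left block, shifted by one. -/
lemma sum_take_node_left (l r : PBT) (j : ℕ) (h1 : 1 ≤ j) (h2 : j ≤ l.internals + 1) :
    (((PBT.node l r).kSeq).take j).sum = (l.kSeq.take j).sum + 1 := by
  have hlen : (incHead (l.kSeq ++ [0])).length = l.internals + 1 := by
    simp [length_incHead, length_kSeq]
  simp only [PBT.kSeq]
  rw [List.take_append, hlen]
  have : j - (l.internals + 1) = 0 := by omega
  rw [this]
  simp only [List.take_zero, List.append_nil, take_incHead _ _ h1]
  rw [sum_incHead, sum_take_append_zero]
  intro hc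
  have := congrArg List.length hc
  simp [List.length_take] at this
  omega

lemma sum_take_node_right (l r : PBT) (j : ℕ) (h : l.internals + 1 ≤ j) :
    (((PBT.node l r).kSeq).take j).sum
      = l.internals + 1 + (r.kSeq.take (j - (l.internals + 1))).sum := by
  have hlen : (incHead (l.kSeq ++ [0])).length = l.internals + 1 := by
    simp [length_incHead, length_kSeq]
  simp only [PBT.kSeq]
  rw [List.take_append, hlen, List.take_of_length_le (by omega),
    List.sum_append, sum_incHead _ (by simp)]
  simp only [List.sum_append, sum_kSeq, hlen, List.sum_cons, List.sum_nil]
  omega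

/-- Lemma A: all prefix sums dominate. -/
lemma prefix_ge (t : PBT) : ∀ j ≤ t.internals, j ≤ (t.kSeq.take j).sum := by
  induction t with
  | leaf =>
    intro j hj
    simp only [PBT.internals, Nat.le_zero] at hj
    subst hj; simp
  | node l r ihl ihr =>
    intro j hj
    rcases Nat.eq_zero_or_pos j with rfl | hj1
    · simp
    rcases le_or_gt j (l.internals + 1) with h | h
    · rw [sum_take_node_left l r j hj1 h]
      rcases le_or_gt j l.internals with h' | h'
      · have := ihl j h'; omega
      · -- j = l.internals + 1
        have : j = l.internals + 1 := by omega
        subst this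
        have : (List.take (l.internals + 1) l.kSeq).sum = l.kSeq.sum := by
          rw [List.take_of_length_le (by rw [length_kSeq]; omega)]
        rw [this, sum_kSeq]
    · rw [sum_take_node_right l r j (by omega)]
      have hle : j - (l.internals + 1) ≤ r.internals := by
        simp [PBT.internals] at hj; omega
      have := ihr _ hle
      omega

/-- strictness on the left block -/
lemma prefix_gt (l r : PBT) (j : ℕ) (h1 : 1 ≤ j) (h2 : j ≤ l.internals) :
    j < (((PBT.node l r).kSeq).take j).sum := by
  rw [sum_take_node_left l r j h1 (by omega)]
  have := prefix_ge l j h2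
  omega

lemma prefix_eq (l r : PBT) :
    (((PBT.node l r).kSeq).take (l.internals + 1)).sum = l.internals + 1 := by
  rw [sum_take_node_right l r _ le_rfl]
  simp

end PBTaux

section Inj
open PBTaux

lemma left_le (l1 r1 l2 r2 : PBT)
    (h : (PBT.node l1 r1).kSeq = (PBT.node l2 r2).kSeq) :
    l1.internals ≤ l2.internals := by
  by_contra hlt
  push_neg at hlt
  -- m := l2.internals + 1 ≤ l1.internals
  have hm : l2.internals + 1 ≤ l1.internals := hlt
  have h1 := prefix_gt l1 r1 (l2.internals + 1) (by omega) hm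
  have h2 := prefix_eq l2 r2
  rw [h] at h1
  omega

lemma kSeq_injective : Function.Injective PBT.kSeq := by
  intro t1
  induction t1 with
  | leaf =>
    intro t2 h
    cases t2 with
    | leaf => rfl
    | node l r =>
      have := congrArg List.length h
      simp [length_kSeq, PBT.kSeq, length_incHead] at this
      omega
  | node l1 r1 ihl ihr =>
    intro t2 h
    cases t2 with
    | leaf =>
      have := congrArg List.length h
      simp [length_kSeq, PBT.kSeq, length_incHead] at this
    | node l2 r2 =>
      have hint : l1.internals = l2.internals :=
        le_antisymm (left_le _ _ _ _ h) (left_le _ _ _ _ h.symm)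
      have hlen : (incHead (l1.kSeq ++ [0])).length = (incHead (l2.kSeq ++ [0])).length := by
        simp [length_incHead, length_kSeq, hint]
      obtain ⟨hb, hr⟩ := List.append_inj h hlen
      have hL : l1.kSeq ++ [0] = l2.kSeq ++ [0] := by
        cases hx1 : l1.kSeq ++ [0] with
        | nil => simp at hx1
        | cons a s =>
          cases hx2 : l2.kSeq ++ [0] with
          | nil => simp at hx2
          | cons b u =>
            rw [hx1, hx2] at hb
            simp [incHead] at hb
            simp [hb.1, hb.2]
      have : l1.kSeq = l2.kSeq :=
        (List.append_inj hL (by simp [length_kSeq, hint])).1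
      rw [ihl this, ihr hr]
end Inj

section Surj
open PBTaux

lemma sum_take_succ' (k : List ℕ) (m : ℕ) (h : m < k.length) :
    (k.take (m+1)).sum = (k.take m).sum + k.getD m 0 := by
  rw [List.take_succ, List.sum_append, List.getD_eq_getElem?_getD,
    List.getElem?_eq_getElem h]
  simp

lemma exists_tree (N : ℕ) : ∀ (k : List ℕ), k.length = N → k.sum = N →
    (∀ j, 1 ≤ j → j ≤ N → j ≤ (k.take j).sum) → ∃ t : PBT, t.kSeq = k := by
  induction N using Nat.strong_induction_on with
  | _ N IH =>
  intro k hlen hsum hpre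
  rcases Nat.eq_zero_or_pos N with rfl | hN
  · refine ⟨PBT.leaf, ?_⟩
    cases k with
    | nil => rfl
    | cons a t => simp at hlen
  obtain ⟨k0, k', rfl⟩ : ∃ a t, k = a :: t := by
    cases k with
    | nil => simp at hlen; omega
    | cons a t => exact ⟨a, t, rfl⟩
  classical
  have hPN : 1 ≤ N ∧ (((k0 :: k').take N).sum = N) :=
    ⟨hN, by rw [List.take_of_length_le (by omega)]; exact hsum⟩
  have hPex : ∃ j, 1 ≤ j ∧ (((k0 :: k').take j).sum = j) := ⟨N, hPN⟩
  set m := Nat.find hPex with hmdef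
  obtain ⟨hm1, hPm⟩ : 1 ≤ m ∧ (((k0 :: k').take m).sum = m) := Nat.find_spec hPex
  have hmle : m ≤ N := Nat.find_le hPN
  have hmin : ∀ j, 1 ≤ j → j < m → j < (((k0 :: k').take j).sum) := by
    intro j h1 h2
    have hne := Nat.find_min hPex h2
    push_neg at hne
    have h3 := hpre j h1 (by omega)
    have := hne h1
    omega
  clear_value m
  have hlen' : k'.length = N - 1 := by simp at hlen; omega
  rcases eq_or_lt_of_le hm1 with hm1' | hm2
  · -- m = 1 : left subtree is a leaf
    have hk0 : k0 = 1 := by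
      have : ((k0 :: k').take 1).sum = 1 := by rw [← hm1'] at hPm; exact hPm
      simpa using this
    have hsum' : k'.sum = N - 1 := by simp at hsum; omega
    have hpre' : ∀ j, 1 ≤ j → j ≤ N - 1 → j ≤ (k'.take j).sum := by
      intro j h1 h2
      have h := hpre (j + 1) (by omega) (by omega)
      rw [show (k0 :: k').take (j + 1) = k0 :: k'.take j from by simp] at h
      simp only [List.sum_cons] at h
      omega
    obtain ⟨r, hr⟩ := IH (N - 1) (by omega) k' hlen' hsum' hpre'
    exact ⟨PBT.node PBT.leaf r, by simp [PBT.kSeq, incHead, hr, hk0]⟩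
  · -- m ≥ 2
    obtain ⟨m', rfl⟩ : ∃ m', m = m' + 2 := ⟨m - 2, by omega⟩
    have hk0 : 2 ≤ k0 := by
      have := hmin 1 le_rfl (by omega)
      simp at this; omega
    -- the (m-1)-st prefix sum equals m, and the m-th entry is 0
    have hsm1 : (((k0 :: k').take (m' + 1)).sum) = m' + 2 ∧ (k0 :: k').getD (m' + 1) 0 = 0 := by
      have h1 := hmin (m' + 1) (by omega) (by omega)
      have h2 := sum_take_succ' (k0 :: k') (m' + 1) (by simp; omega)
      rw [show m' + 1 + 1 = m' + 2 from rfl] at h2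
      constructor <;> omega
    have hgd : k'.getD m' 0 = 0 := by
      have := hsm1.2; simpa using this
    have htk : ((k0 :: k').take (m' + 1)) = k0 :: k'.take m' := by simp
    -- left list
    set Lk : List ℕ := (k0 - 1) :: k'.take m' with hLk
    have hLlen : Lk.length = m' + 1 := by
      simp [hLk, List.length_take]; omega
    have hLsum : Lk.sum = m' + 1 := by
      have := hsm1.1
      rw [htk] at this
      simp only [List.sum_cons] at this
      simp [hLk]; omega
    have hLpre : ∀ j, 1 ≤ j → j ≤ m' + 1 → j ≤ (Lk.take j).sum := by
      intro j h1 h2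
      obtain ⟨j', rfl⟩ : ∃ j', j = j' + 1 := ⟨j - 1, by omega⟩
      have hkey := hmin (j' + 1) (by omega) (by omega)
      have htk' : ((k0 :: k').take (j' + 1)) = k0 :: k'.take j' := by simp
      rw [htk'] at hkey
      simp only [List.sum_cons] at hkey
      have hLt : Lk.take (j' + 1) = (k0 - 1) :: (k'.take j') := by
        simp [hLk, List.take_take]
        omega
      rw [hLt]
      simp only [List.sum_cons]
      omega
    obtain ⟨l, hl⟩ := IH (m' + 1) (by omega) Lk hLlen hLsum hLpre
    have hlint : l.internals = m' + 1 := by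
      rw [← length_kSeq, hl, hLlen]
    -- right list
    set Rk : List ℕ := k'.drop (m' + 1) with hRk
    have hRlen : Rk.length = N - (m' + 2) := by
      simp [hRk]; omega
    have hRsum : Rk.sum = N - (m' + 2) := by
      have hsplit : (k0 :: k').sum = ((k0 :: k').take (m' + 2)).sum + ((k0 :: k').drop (m' + 2)).sum := by
        rw [← List.sum_append, List.take_append_drop]
      have hdr : (k0 :: k').drop (m' + 2) = Rk := by simp [hRk]
      rw [hdr, hsum, hPm] at hsplit
      omega
    have hRpre : ∀ j, 1 ≤ j → j ≤ N - (m' + 2) → j ≤ (Rk.take j).sum := by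
      intro j h1 h2
      have hkey := hpre (m' + 2 + j) (by omega) (by omega)
      have hsplit : (k0 :: k').take (m' + 2 + j)
          = (k0 :: k').take (m' + 2) ++ ((k0 :: k').drop (m' + 2)).take j := by
        rw [← List.take_add]
      have hdr : (k0 :: k').drop (m' + 2) = Rk := by simp [hRk]
      rw [hsplit, hdr, List.sum_append, hPm] at hkey
      omega
    obtain ⟨r, hrr⟩ := IH (N - (m' + 2)) (by omega) Rk hRlen hRsum hRpre
    refine ⟨PBT.node l r, ?_⟩
    simp only [PBT.kSeq, hl, hrr, hLk]
    have h1 : ((k0 - 1) :: k'.take m') ++ [0] = (k0 - 1) :: (k'.take m' ++ [0]) := by simp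
    rw [h1]
    have h2 : incHead ((k0 - 1) :: (k'.take m' ++ [0])) = (k0 - 1 + 1) :: (k'.take m' ++ [0]) := rfl
    rw [h2]
    have h3 : k0 - 1 + 1 = k0 := by omega
    have h4 : k'.take m' ++ [0] = k'.take (m' + 1) := by
      rw [List.take_succ, List.getElem?_eq_getElem (by omega)]
      have : k'[m'] = 0 := by
        have := hgd
        rwa [List.getD_eq_getElem?_getD, List.getElem?_eq_getElem (by omega), Option.getD_some] at this
      simp [this]
    rw [h3, h4]
    simp [hRk]
end Surj

namespace PBTaux

lemma sum_Iic_fin (n : ℕ) (g : ℕ → ℕ) (j : Fin n) :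
    ∑ l ∈ Finset.Iic j, g l.val = ∑ i ∈ Finset.range (j.val + 1), g i := by
  have hn := j.pos
  refine Finset.sum_nbij' (fun l => l.val) (fun i => ⟨min i (n-1), by omega⟩) ?_ ?_ ?_ ?_ ?_
  · intro a ha
    simp only [Finset.mem_Iic, Fin.le_def] at ha
    simp only [Finset.mem_range]
    omega
  · intro a ha
    simp only [Finset.mem_range] at ha
    simp only [Finset.mem_Iic, Fin.le_def]
    have := j.isLt
    omega
  · intro a ha
    simp only [Finset.mem_Iic, Fin.le_def] at ha
    have := a.isLt
    apply Fin.ext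
    simp only []
    omega
  · intro a ha
    simp only [Finset.mem_range] at ha
    have := j.isLt
    simp only []
    omega
  · intro a ha; rfl

lemma sum_range_getD (L : List ℕ) (m : ℕ) :
    ∑ i ∈ Finset.range m, L.getD i 0 = (L.take m).sum := by
  induction m with
  | zero => simp
  | succ m ih =>
    rw [Finset.sum_range_succ, ih]
    rcases lt_or_ge m L.length with h | h
    · rw [sum_take_succ' L m h]
    · rw [List.take_of_length_le (by omega), List.take_of_length_le (by omega),
        List.getD_eq_getElem?_getD, List.getElem?_eq_none (by omega)]
      simp

lemma sum_Iic_getD (n : ℕ) (L : List ℕ) (j : Fin n) :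
    ∑ l ∈ Finset.Iic j, L.getD l.val 0 = (L.take (j.val + 1)).sum := by
  rw [sum_Iic_fin n (fun i => L.getD i 0) j, sum_range_getD]

end PBTaux

open PBTaux

/-- The map `T ↦ k(T)` is a bijection from plane binary trees with `n` internal
vertices onto `K_n`. -/
theorem kSeq_bijOn_Kn (n : ℕ) (hn : 0 < n) :
    Set.BijOn (fun (t : PBT) (i : Fin n) => t.kSeq.getD i 0)
      {t : PBT | t.internals = n}
      {k : Fin n → ℕ |
        (∀ j : Fin n, (j : ℕ) + 1 ≤ n - 1 → (j : ℕ) + 1 ≤ ∑ l ∈ Finset.Iic j, k l) ∧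
        ∑ i, k i = n} := by
  classical
  refine ⟨?_, ?_, ?_⟩
  · -- MapsTo
    intro t ht
    simp only [Set.mem_setOf_eq] at ht ⊢
    constructor
    · intro j hj
      rw [sum_Iic_getD n t.kSeq j]
      exact prefix_ge t (j.val + 1) (by have := j.isLt; omega)
    · rw [show (∑ i : Fin n, t.kSeq.getD (↑i) 0) = ∑ i ∈ Finset.range n, t.kSeq.getD i 0
        from Fin.sum_univ_eq_sum_range (fun m => t.kSeq.getD m 0) n, sum_range_getD,
        List.take_of_length_le (by rw [length_kSeq]; omega), sum_kSeq, ht]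
  · -- InjOn
    intro t1 h1 t2 h2 hft
    simp only [Set.mem_setOf_eq] at h1 h2
    apply kSeq_injective
    apply List.ext_getElem (by rw [length_kSeq, length_kSeq, h1, h2])
    intro i hi1 hi2
    have hi : i < n := by rwa [length_kSeq, h1] at hi1
    have := congrFun hft ⟨i, hi⟩
    simp only [List.getD_eq_getElem _ _ hi1, List.getD_eq_getElem _ _ hi2] at this ⊢
    exact this
  · -- SurjOn
    intro k hk
    simp only [Set.mem_setOf_eq] at hk
    obtain ⟨hk1, hk2⟩ := hk
    have hkeq : ∀ i : Fin n, (List.ofFn k).getD i.val 0 = k i := by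
      intro i
      rw [List.getD_eq_getElem _ _ (by simp : i.val < (List.ofFn k).length),
        List.getElem_ofFn]
    set L := List.ofFn k with hLdef
    have hLlen : L.length = n := by simp [hLdef]
    have hLsum : L.sum = n := by
      rw [hLdef, List.sum_ofFn, hk2]
    have hLpre : ∀ j, 1 ≤ j → j ≤ n → j ≤ (L.take j).sum := by
      intro j h1 h2
      rcases eq_or_lt_of_le h2 with rfl | hlt
      · rw [List.take_of_length_le (by omega), hLsum]
      · have hj : j - 1 < n := by omega
        have hc := hk1 ⟨j - 1, hj⟩ (by simp only []; omega)
        rw [← Finset.sum_congr rfl (fun l _ => (hkeq l)), sum_Iic_getD n L ⟨j - 1, hj⟩] at hc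
        simp only [] at hc
        rw [show j - 1 + 1 = j from by omega] at hc
        exact hc
    obtain ⟨t, ht⟩ := exists_tree n L hLlen hLsum hLpre
    refine ⟨t, ?_, ?_⟩
    · simp only [Set.mem_setOf_eq]
      rw [← length_kSeq, ht, hLlen]
    · funext i
      simp only [ht]
      exact hkeq i
end

section
/- Let P be a finite poset. The set of all order-preserving maps f : P → ℝ is the disjoint union, over linear extensions π = a_1⋯a_p of P, of the sets A_π consisting of those f with f(α_{a_1}) ≤ f(α_{a_2}) ≤ ⋯ ≤ f(α_{a_p}) and with strict inequality f(α_{a_j}) < f(α_{a_{j+1}}) whenever a_j > a_{j+1}. -/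
namespace OPPartitionAux

/-- A function on `Fin p` increasing at each successive step is strictly monotone. -/
lemma fin_strictMono_of_step {α : Type*} [Preorder α] {p : ℕ} {g : Fin p → α}
    (h : ∀ (i : Fin p) (hh : (i : ℕ) + 1 < p), g i < g ⟨(i : ℕ) + 1, hh⟩) :
    StrictMono g := by
  intro i j hij
  obtain ⟨j, hj⟩ := j
  induction j with
  | zero => exact absurd hij (by simp [Fin.lt_def])
  | succ n ih =>
    have hn : n < p := by omega
    have hi : (i : ℕ) < n + 1 := hij
    rcases Nat.lt_or_ge (i : ℕ) n with hlt | hge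
    · exact lt_trans (ih hn hlt) (h ⟨n, hn⟩ hj)
    · have : i = ⟨n, hn⟩ := Fin.ext (Nat.le_antisymm (Nat.lt_succ_iff.mp hi) hge)
      subst this
      exact h _ hj

/-- The key lemma, stated with abstract relations `le'`, `lt'` standing for the
partial order `r`, so that the ambient order on `Fin p` is the standard one. -/
theorem main (p : ℕ) (f : Fin p → ℝ) (le' lt' : Fin p → Fin p → Prop)
    (hr : ∀ i j : Fin p, le' i j → i ≤ j)
    (hlt : ∀ i j : Fin p, lt' i j → le' i j ∧ i ≠ j)
    (hd : ∀ z z' : Fin p, le' z z' → z = z' ∨ lt' z z') :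
    (∀ z z' : Fin p, le' z z' → f z ≤ f z') ↔
      ∃! a : Equiv.Perm (Fin p),
        (∀ i j : Fin p, lt' (a i) (a j) → i < j) ∧
        (∀ (i : Fin p) (h : (i : ℕ) + 1 < p),
          f (a i) ≤ f (a ⟨(i : ℕ) + 1, h⟩) ∧
          (a ⟨(i : ℕ) + 1, h⟩ < a i → f (a i) < f (a ⟨(i : ℕ) + 1, h⟩))) := by
  classical
  set key : Fin p → Lex (ℝ × Fin p) := fun i => toLex (f i, i) with hkeydef
  have hkey : Function.Injective key := by
    intro i j h
    have := congrArg (fun x => (ofLex x).2) h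
    simpa [hkeydef] using this
  -- condition (2) for a permutation `b` implies `key ∘ b` is strictly monotone
  have hB : ∀ b : Equiv.Perm (Fin p),
      (∀ (i : Fin p) (h : (i : ℕ) + 1 < p),
        f (b i) ≤ f (b ⟨(i : ℕ) + 1, h⟩) ∧
        (b ⟨(i : ℕ) + 1, h⟩ < b i → f (b i) < f (b ⟨(i : ℕ) + 1, h⟩))) →
      StrictMono (fun i => key (b i)) := by
    intro b hcond
    apply fin_strictMono_of_step
    intro i hh
    obtain ⟨hle, hdesc⟩ := hcond i hh
    have hne : b i ≠ b ⟨(i : ℕ) + 1, hh⟩ := by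
      intro h
      have := b.injective h
      exact absurd (congrArg Fin.val this) (by simp)
    rcases lt_or_eq_of_le hle with hlt' | heq
    · exact Prod.Lex.lt_iff.2 (Or.inl hlt')
    · have hblt : b i < b ⟨(i : ℕ) + 1, hh⟩ := by
        rcases lt_trichotomy (b i) (b ⟨(i : ℕ) + 1, hh⟩) with h | h | h
        · exact h
        · exact absurd h hne
        · exact absurd (hdesc h) (by rw [heq]; exact lt_irrefl _)
      exact Prod.Lex.lt_iff.2 (Or.inr ⟨heq, hblt⟩)
  -- the finset of keys
  set s : Finset (Lex (ℝ × Fin p)) := Finset.image key Finset.univ with hsdef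
  have hscard : s.card = p := by
    rw [hsdef, Finset.card_image_of_injective _ hkey, Finset.card_univ, Fintype.card_fin]
  have hmem : ∀ (b : Equiv.Perm (Fin p)) (x : Fin p), key (b x) ∈ s := fun b x => by
    rw [hsdef]; exact Finset.mem_image_of_mem key (Finset.mem_univ _)
  -- uniqueness: two permutations with strictly monotone key-composition agree
  have hU : ∀ b c : Equiv.Perm (Fin p), StrictMono (fun i => key (b i)) →
      StrictMono (fun i => key (c i)) → b = c := by
    intro b c hb hc
    have h1 : (fun i => key (b i)) = s.orderEmbOfFin hscard :=
      Finset.orderEmbOfFin_unique hscard (hmem b) hb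
    have h2 : (fun i => key (c i)) = s.orderEmbOfFin hscard :=
      Finset.orderEmbOfFin_unique hscard (hmem c) hc
    have h3 : ∀ i, key (b i) = key (c i) := fun i => by
      rw [show key (b i) = (fun i => key (b i)) i from rfl, h1,
        show key (c i) = (fun i => key (c i)) i from rfl, h2]
    ext i
    exact congrArg Fin.val (hkey (h3 i))
  constructor
  · intro hf
    -- construct the canonical permutation from `orderIsoOfFin`
    have hrange : Set.range key = ↑s := by
      rw [hsdef, Finset.coe_image, Finset.coe_univ, Set.image_univ]
    set keyEquiv : Fin p ≃ ↥s :=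
      (Equiv.ofInjective key hkey).trans (Equiv.setCongr hrange) with hkEdef
    have hcoe : ∀ x : Fin p, (keyEquiv x : Lex (ℝ × Fin p)) = key x := fun x => rfl
    set a : Equiv.Perm (Fin p) :=
      (s.orderIsoOfFin hscard).toEquiv.trans keyEquiv.symm with hadef
    have hka : ∀ i, key (a i) = s.orderEmbOfFin hscard i := by
      intro i
      have h1 : keyEquiv (a i) = (s.orderIsoOfFin hscard) i := by
        rw [hadef]
        exact keyEquiv.apply_symm_apply _
      rw [← hcoe, h1, Finset.coe_orderIsoOfFin_apply]
    have ha : StrictMono (fun i => key (a i)) := by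
      intro i j hij
      simp only [hka]
      exact (s.orderEmbOfFin hscard).strictMono hij
    -- strictly monotone key-composition implies both conditions
    have hcond : ∀ b : Equiv.Perm (Fin p), StrictMono (fun i => key (b i)) →
        (∀ i j : Fin p, lt' (b i) (b j) → i < j) ∧
        (∀ (i : Fin p) (h : (i : ℕ) + 1 < p),
          f (b i) ≤ f (b ⟨(i : ℕ) + 1, h⟩) ∧
          (b ⟨(i : ℕ) + 1, h⟩ < b i → f (b i) < f (b ⟨(i : ℕ) + 1, h⟩))) := by
      intro b hb
      constructor
      · intro i j hij
        obtain ⟨hle, hne⟩ := hlt _ _ hij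
        have hf1 : f (b i) ≤ f (b j) := hf _ _ hle
        have hnat : b i < b j := lt_of_le_of_ne (hr _ _ hle) hne
        have hklt : key (b i) < key (b j) := by
          rcases lt_or_eq_of_le hf1 with h | h
          · exact Prod.Lex.lt_iff.2 (Or.inl h)
          · exact Prod.Lex.lt_iff.2 (Or.inr ⟨h, hnat⟩)
        by_contra hc
        have hji : j ≤ i := le_of_not_gt hc
        rcases lt_or_eq_of_le hji with h | h
        · exact absurd (hb h) (asymm hklt)
        · rw [h] at hklt; exact lt_irrefl _ hklt
      · intro i hh
        have hk : key (b i) < key (b ⟨(i : ℕ) + 1, hh⟩) :=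
          hb (show i < (⟨(i : ℕ) + 1, hh⟩ : Fin p) from by simp [Fin.lt_def])
        rcases Prod.Lex.lt_iff.1 hk with h | ⟨h1, h2⟩
        · exact ⟨le_of_lt h, fun _ => h⟩
        · exact ⟨le_of_eq h1, fun hdesc => absurd h2 (not_lt_of_gt hdesc)⟩
    refine ⟨a, hcond a ha, ?_⟩
    intro b hb
    exact hU b a (hB b hb.2) ha
  · rintro ⟨a, ⟨h1, h2⟩, -⟩ z z' hzz'
    rcases hd _ _ hzz' with rfl | hltzz
    · exact le_refl _
    · have ha := hB a h2
      have hi : lt' (a (a.symm z)) (a (a.symm z')) := by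
        simpa using hltzz
      have hij : a.symm z < a.symm z' := h1 _ _ hi
      have hk : key (a (a.symm z)) < key (a (a.symm z')) := ha hij
      rcases Prod.Lex.lt_iff.1 hk with h | ⟨h, -⟩
      · simpa [hkeydef] using le_of_lt h
      · simpa [hkeydef] using le_of_eq h

end OPPartitionAux

/-- Let `P` be a partial order on `{α_1,…,α_p}` (modeled on `Fin p`) with
`α_i < α_j → i < j`.  Every order-preserving map `f : P → ℝ` lies in exactly one
set `A_π` for a linear extension `π = a_1⋯a_p` of `P`, where
`A_π = {f : f(α_{a_1}) ≤ ⋯ ≤ f(α_{a_p}), with strict inequality at descents}`. -/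
theorem order_preserving_partition_by_linear_extensions
    (p : ℕ) (r : PartialOrder (Fin p)) (hr : ∀ i j : Fin p, r.le i j → i ≤ j)
    (f : Fin p → ℝ) :
    (∀ z z' : Fin p, r.le z z' → f z ≤ f z') ↔
      ∃! a : Equiv.Perm (Fin p),
        (∀ i j : Fin p, r.lt (a i) (a j) → i < j) ∧
        (∀ (i : Fin p) (h : (i : ℕ) + 1 < p),
          f (a i) ≤ f (a ⟨(i : ℕ) + 1, h⟩) ∧
          (a ⟨(i : ℕ) + 1, h⟩ < a i → f (a i) < f (a ⟨(i : ℕ) + 1, h⟩))) := by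
  refine OPPartitionAux.main p f r.le r.lt hr ?_ ?_
  · intro i j h
    exact ⟨le_of_lt h, ne_of_lt h⟩
  · intro z z' h
    by_cases h' : z = z'
    · exact Or.inl h'
    · exact Or.inr (lt_of_le_of_ne h h')
end

section
/- Let τ_i ⊆ ℝ^n be the simplex defined by y_1 = ⋯ = y_{i−1} = 0, y_i ≥ 0, …, y_n ≥ 0, and y_i + ⋯ + y_n ≤ 1 (so τ_i has vertices the origin and the coordinate unit vectors e_j for i ≤ j ≤ n). Then for all x_1,…,x_n ≥ 0, Π_n(x) equals the Minkowski linear combination x_1·τ_1 + x_2·τ_2 + ⋯ + x_n·τ_n. -/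
open Finset

/-! Write `X_k = x_1 + ⋯ + x_k` and `S_k = z_1 + ⋯ + z_k`. For `z ∈ Π_n(x)` the intervals
`[S_{j-1}, S_j]` cut `[0, S_n]` into pieces of lengths `z_j`, and the intervals `[X_{i-1}, X_i]`
cut `[0, X_n] ⊇ [0, S_n]` into pieces of lengths `x_i`. The length `a_ij` of
`[X_{i-1}, X_i] ∩ [S_{j-1}, S_j]` then has column sums `z_j` and row sums at most `x_i`, and
`a_ij = 0` for `j < i` because `S_j ≤ X_j ≤ X_{i-1}`; so `y_i = a_i / x_i ∈ τ_i` and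
`z = ∑ x_i y_i`. Conversely, since `y_i` vanishes before `i`, only the terms `i ≤ k` contribute
to `z_1 + ⋯ + z_k`, each at most `x_i`. -/

/-- The length of `[a, b] ∩ [c, d]` when `a ≤ b` and `c ≤ d`: the difference of the
projections of `b` and `a` onto `[c, d]`. -/
def overlap (a b c d : ℝ) : ℝ := min (max b c) d - min (max a c) d

lemma overlap_nonneg {a b c d : ℝ} (hab : a ≤ b) : 0 ≤ overlap a b c d :=
  sub_nonneg.2 (min_le_min_right _ (max_le_max_right _ hab))

lemma overlap_comm {a b c d : ℝ} (hab : a ≤ b) (hcd : c ≤ d) :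
    overlap a b c d = overlap c d a b := by
  simp only [overlap, min_def, max_def]
  split_ifs <;> linarith

lemma overlap_le {a b c d : ℝ} (hcd : c ≤ d) : overlap a b c d ≤ d - c :=
  sub_le_sub (min_le_right _ _) (le_min (le_max_right _ _) hcd)

lemma overlap_eq_zero {a b c d : ℝ} (hda : d ≤ a) (hab : a ≤ b) : overlap a b c d = 0 := by
  simp only [overlap, min_eq_right ((hda.trans hab).trans (le_max_left _ _)),
    min_eq_right (hda.trans (le_max_left _ _)), sub_self]

lemma overlap_eq_sub {a b c d : ℝ} (hac : a ≤ c) (hcd : c ≤ d) (hdb : d ≤ b) :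
    overlap a b c d = d - c := by
  rw [overlap, max_eq_right hac, min_eq_left hcd, min_eq_right (hdb.trans (le_max_left _ _))]

lemma sum_range_overlap (f : ℕ → ℝ) (c d : ℝ) (n : ℕ) :
    ∑ i ∈ range n, overlap (f i) (f (i + 1)) c d = overlap (f 0) (f n) c d :=
  sum_range_sub (fun k => min (max (f k) c) d) n

section CumulativeSum

variable {n : ℕ}

/-- `cumSum x k = x_0 + ⋯ + x_{k-1}`, indexed by `ℕ` so that `k = 0` and `k = n` are allowed. -/
def cumSum (x : Fin n → ℝ) (k : ℕ) : ℝ := ∑ j : Fin n with j.val < k, x j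

@[simp]
lemma cumSum_zero (x : Fin n → ℝ) : cumSum x 0 = 0 := by
  simp [cumSum]

lemma cumSum_succ_eq_sum_Iic (x : Fin n → ℝ) (i : Fin n) :
    cumSum x (i + 1) = ∑ j ∈ Iic i, x j := by
  unfold cumSum
  congr 1
  ext j
  simp only [mem_filter, mem_univ, true_and, mem_Iic, Fin.le_def]
  omega

lemma cumSum_succ (x : Fin n → ℝ) (i : Fin n) : cumSum x (i + 1) = cumSum x i + x i := by
  have : filter (fun j : Fin n => (j : ℕ) < i + 1) univ =
      insert i (filter (fun j : Fin n => (j : ℕ) < i) univ) := by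
    ext j
    simp only [mem_filter, mem_univ, true_and, mem_insert, Fin.ext_iff]
    omega
  rw [cumSum, cumSum, this, sum_insert (by simp), add_comm]

lemma monotone_cumSum {x : Fin n → ℝ} (hx : 0 ≤ x) : Monotone (cumSum x) :=
  fun _ _ hkl => sum_le_sum_of_subset_of_nonneg
    (monotone_filter_right _ fun _ _ hj => hj.trans_le hkl) fun j _ _ => hx j

theorem exists_upperTriangular_plan {x z : Fin n → ℝ} (hx : 0 ≤ x) (hz : 0 ≤ z)
    (hzx : ∀ i, ∑ j ∈ Iic i, z j ≤ ∑ j ∈ Iic i, x j) :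
    ∃ a : Fin n → Fin n → ℝ, (∀ i j, 0 ≤ a i j) ∧ (∀ i j, j < i → a i j = 0) ∧
      (∀ j, ∑ i, a i j = z j) ∧ ∀ i, ∑ j, a i j ≤ x i := by
  have hX : Monotone (cumSum x) := monotone_cumSum hx
  have hS : Monotone (cumSum z) := monotone_cumSum hz
  have hSX (i : Fin n) : cumSum z (i + 1) ≤ cumSum x (i + 1) := by
    simpa only [cumSum_succ_eq_sum_Iic] using hzx i
  refine ⟨fun i j => overlap (cumSum x i) (cumSum x (i + 1)) (cumSum z j) (cumSum z (j + 1)),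
    fun i j => overlap_nonneg (hX (Nat.le_succ _)), fun i j hji => ?_, fun j => ?_, fun i => ?_⟩
  · exact overlap_eq_zero ((hSX j).trans (hX hji)) (hX (Nat.le_succ _))
  · rw [Fin.sum_univ_eq_sum_range
      (fun i => overlap (cumSum x i) (cumSum x (i + 1)) (cumSum z j) (cumSum z (j + 1))),
      sum_range_overlap, overlap_eq_sub, cumSum_succ, add_sub_cancel_left]
    · simpa using hS (Nat.zero_le j)
    · exact hS (Nat.le_succ _)
    · exact (hSX j).trans (hX j.isLt)
  · simp_rw [overlap_comm (hX (Nat.le_succ i)) (hS (Nat.le_succ _))]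
    rw [Fin.sum_univ_eq_sum_range
      (fun j => overlap (cumSum z j) (cumSum z (j + 1)) (cumSum x i) (cumSum x (i + 1))),
      sum_range_overlap]
    simpa [cumSum_succ] using overlap_le (hX (Nat.le_succ i))

end CumulativeSum

section RowScaling

variable {κ : Type*} [Fintype κ] {v : κ → ℝ} {t : ℝ}

lemma smul_inv_smul_of_sum_le (hv : 0 ≤ v) (hvt : ∑ j, v j ≤ t) : t • t⁻¹ • v = v := by
  rcases eq_or_ne t 0 with rfl | ht
  · have hsum : ∑ j, v j = 0 := le_antisymm hvt (sum_nonneg fun j _ => hv j)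
    have hv0 : v = 0 :=
      funext fun j => (sum_eq_zero_iff_of_nonneg fun j _ => hv j).1 hsum j (mem_univ j)
    simp [hv0]
  · exact smul_inv_smul₀ ht v

lemma sum_inv_smul_le_one (hvt : ∑ j, v j ≤ t) (ht : 0 ≤ t) : ∑ j, (t⁻¹ • v) j ≤ 1 := by
  simpa only [Pi.smul_apply, smul_eq_mul, ← mul_sum] using inv_mul_le_one_of_le₀ hvt ht

end RowScaling

section LowerPartialSums

variable {ι : Type*} [Fintype ι] [LinearOrder ι] [LocallyFiniteOrderBot ι]

lemma sum_Iic_sum_smul_le {x : ι → ℝ} (hx : 0 ≤ x) {y : ι → ι → ℝ}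
    (hy_tri : ∀ i j, j < i → y i j = 0) (hy : ∀ i j, 0 ≤ y i j) (hy_sum : ∀ i, ∑ j, y i j ≤ 1)
    (k : ι) : ∑ j ∈ Iic k, (∑ i, x i • y i) j ≤ ∑ j ∈ Iic k, x j := by
  have hterm (i : ι) : x i * ∑ j ∈ Iic k, y i j ≤ if i ∈ Iic k then x i else 0 := by
    split_ifs with hi
    · exact mul_le_of_le_one_right (hx i) ((sum_le_sum_of_subset_of_nonneg (subset_univ _)
        fun j _ _ => hy i j).trans (hy_sum i))
    · have hki : k < i := not_le.1 (mt mem_Iic.2 hi)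
      rw [sum_eq_zero fun j hj => hy_tri i j ((mem_Iic.1 hj).trans_lt hki), mul_zero]
  calc ∑ j ∈ Iic k, (∑ i, x i • y i) j = ∑ i, x i * ∑ j ∈ Iic k, y i j := by
        simp only [Finset.sum_apply, Pi.smul_apply, smul_eq_mul, mul_sum]
        exact sum_comm
    _ ≤ ∑ i, if i ∈ Iic k then x i else 0 := sum_le_sum fun i _ => hterm i
    _ = ∑ j ∈ Iic k, x j := by rw [sum_ite_mem, univ_inter]

end LowerPartialSums

/-- `Π_n(x)` is the Minkowski linear combination `x_1 τ_1 + ⋯ + x_n τ_n`, where `τ_i`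
is the simplex `{y : y_1 = ⋯ = y_{i-1} = 0, y_j ≥ 0, ∑_{j ≥ i} y_j ≤ 1}`. -/
theorem pi_polytope_eq_minkowski_sum (n : ℕ) (x : Fin n → ℝ) (hx : ∀ i, 0 ≤ x i) :
    {y : Fin n → ℝ | ∀ i : Fin n, 0 ≤ y i ∧
        ∑ j ∈ Finset.Iic i, y j ≤ ∑ j ∈ Finset.Iic i, x j} =
      {z : Fin n → ℝ | ∃ y : Fin n → Fin n → ℝ,
        (∀ i : Fin n,
          (∀ j : Fin n, j < i → y i j = 0) ∧ (∀ j, 0 ≤ y i j) ∧ ∑ j, y i j ≤ 1) ∧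
        z = ∑ i, x i • y i} := by
  ext z
  constructor
  · intro hz
    obtain ⟨a, ha, ha_tri, ha_col, ha_row⟩ :=
      exists_upperTriangular_plan hx (fun i => (hz i).1) fun i => (hz i).2
    refine ⟨fun i => (x i)⁻¹ • a i, fun i => ⟨fun j hj => ?_, fun j => ?_,
      sum_inv_smul_le_one (ha_row i) (hx i)⟩, ?_⟩
    · simp [ha_tri i j hj]
    · exact mul_nonneg (inv_nonneg.2 (hx i)) (ha i j)
    · simp only [smul_inv_smul_of_sum_le (ha _) (ha_row _)]
      ext j
      simp [ha_col]
  · rintro ⟨y, hy, rfl⟩ i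
    refine ⟨?_, sum_Iic_sum_smul_le hx (fun k => (hy k).1) (fun k => (hy k).2.1)
      (fun k => (hy k).2.2) i⟩
    simpa only [Finset.sum_apply, Pi.smul_apply, smul_eq_mul] using
      sum_nonneg fun k _ => mul_nonneg (hx k) ((hy k).2.1 i)
end

section
/- Suppose x_1 > 0 and define a_1 < ⋯ < a_k = n by the blocks of equal values among the partial sums u_i = x_1+⋯+x_i, with b_i = a_i − a_{i−1} (a_0 = 0). Then the polytope Π_n(x) is combinatorially equivalent to the product of simplices σ_{b_1} × ⋯ × σ_{b_k}. In particular, if all x_i > 0 then Π_n(x) is combinatorially equivalent to the n-cube. -/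
open Finset Set

section Generic
variable {V : Type*} [AddCommGroup V] [Module ℝ V] {ι : Type*} [Fintype ι]
variable (ℓ : ι → V →ₗ[ℝ] ℝ) (bd : ι → ℝ)

def gpoly : Set V := {y | ∀ c, ℓ c y ≤ bd c}

def gtight (y : V) : Set ι := {c | ℓ c y = bd c}

lemma gpoly_tight_mem {y : V} (hy : y ∈ gpoly ℓ bd) {c : ι} : c ∈ gtight ℓ bd y ↔ ℓ c y = bd c :=
  Iff.rfl

def gface (S : Set ι) : Set V := {y | y ∈ gpoly ℓ bd ∧ ∀ c ∈ S, ℓ c y = bd c}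

omit [Fintype ι] in
lemma gface_convex (S : Set ι) : Convex ℝ (gface ℓ bd S) := by
  intro y hy w hw t s ht hs hts
  have hlin : ∀ c, ℓ c (t • y + s • w) = t * ℓ c y + s * ℓ c w := by
    intro c; simp [map_add, map_smul, smul_eq_mul]
  constructor
  · intro c
    have h1 := hy.1 c; have h2 := hw.1 c
    rw [hlin]
    have e1 : t * bd c + s * bd c = bd c := by rw [← add_mul, hts, one_mul]
    have e2 := mul_le_mul_of_nonneg_left h1 ht
    have e3 := mul_le_mul_of_nonneg_left h2 hs
    linarith
  · intro c hc
    have h1 := hy.2 c hc; have h2 := hw.2 c hc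
    rw [hlin, h1, h2, ← add_mul, hts, one_mul]

omit [Fintype ι] in
lemma seg_coeffs {y w z : V} (h : z ∈ openSegment ℝ y w) :
    ∃ t s : ℝ, 0 < t ∧ 0 < s ∧ t + s = 1 ∧ ∀ c, ℓ c z = t * ℓ c y + s * ℓ c w := by
  obtain ⟨t, s, ht, hs, hts, rfl⟩ := h
  exact ⟨t, s, ht, hs, hts, fun c => by simp [map_add, map_smul, smul_eq_mul]⟩

omit [Fintype ι] in
lemma gface_extreme (S : Set ι) : IsExtreme ℝ (gpoly ℓ bd) (gface ℓ bd S) := by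
  refine ⟨fun y hy => hy.1, ?_⟩
  intro y hy w hw z hz hseg
  obtain ⟨t, s, ht, hs, hts, hc⟩ := seg_coeffs ℓ hseg
  have key : ∀ c ∈ S, ℓ c y = bd c ∧ ℓ c w = bd c := by
    intro c hcS
    have h1 := hy c; have h2 := hw c
    have h3 := hz.2 c hcS
    have h4 := hc c
    have e1 : t * bd c + s * bd c = bd c := by rw [← add_mul, hts, one_mul]
    have e2 := mul_le_mul_of_nonneg_left h1 ht.le
    have e3 := mul_le_mul_of_nonneg_left h2 hs.le
    have e4 : t * ℓ c y = t * bd c := by linarith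
    have e5 : s * ℓ c w = s * bd c := by linarith
    exact ⟨mul_left_cancel₀ (ne_of_gt ht) e4, mul_left_cancel₀ (ne_of_gt hs) e5⟩
  exact ⟨hy, fun c hcS => (key c hcS).1⟩

omit [Fintype ι] in
lemma gtight_mid {y w : V} (hy : y ∈ gpoly ℓ bd) (hw : w ∈ gpoly ℓ bd) :
    gtight ℓ bd ((1/2 : ℝ) • y + (1/2 : ℝ) • w) = gtight ℓ bd y ∩ gtight ℓ bd w := by
  ext c
  have h1 := hy c; have h2 := hw c
  have hlin : ℓ c ((1/2 : ℝ) • y + (1/2 : ℝ) • w) = (1/2) * ℓ c y + (1/2) * ℓ c w := by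
    simp [map_add, map_smul, smul_eq_mul]
  simp only [gtight, mem_setOf_eq, Set.mem_inter_iff, hlin]
  constructor
  · intro h; constructor <;> linarith
  · rintro ⟨hA, hB⟩; rw [hA, hB]; ring

lemma extreme_eq_gface {F : Set V} (hconv : Convex ℝ F)
    (hext : IsExtreme ℝ (gpoly ℓ bd) F) (hne : F.Nonempty) :
    ∃ z, z ∈ F ∧ F = gface ℓ bd (gtight ℓ bd z) := by
  classical
  have hNE : {m | ∃ y, y ∈ F ∧ (gtight ℓ bd y).ncard = m}.Nonempty := by
    obtain ⟨y, hy⟩ := hne; exact ⟨_, y, hy, rfl⟩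
  obtain ⟨z, hzF, hzcard⟩ := Nat.sInf_mem hNE
  have hmin : ∀ y ∈ F, gtight ℓ bd z ⊆ gtight ℓ bd y := by
    intro y hyF
    by_contra hsub
    set m := (1/2 : ℝ) • z + (1/2 : ℝ) • y with hm
    have hmF : m ∈ F := hconv hzF hyF (by norm_num) (by norm_num) (by norm_num)
    have htm : gtight ℓ bd m = gtight ℓ bd z ∩ gtight ℓ bd y :=
      gtight_mid ℓ bd (hext.1 hzF) (hext.1 hyF)
    have hss : gtight ℓ bd m ⊂ gtight ℓ bd z := by
      rw [htm]
      refine ⟨Set.inter_subset_left, fun h => hsub fun c hc => ?_⟩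
      exact (h hc).2
    have hlt : (gtight ℓ bd m).ncard < (gtight ℓ bd z).ncard :=
      Set.ncard_lt_ncard hss (Set.toFinite _)
    have : sInf {m | ∃ y, y ∈ F ∧ (gtight ℓ bd y).ncard = m} ≤ (gtight ℓ bd m).ncard :=
      Nat.sInf_le ⟨m, hmF, rfl⟩
    omega
  refine ⟨z, hzF, Set.Subset.antisymm ?_ ?_⟩
  · intro y hyF
    exact ⟨hext.1 hyF, fun c hc => hmin y hyF hc⟩
  · intro y hy
    by_cases hyz : y = z
    · exact hyz ▸ hzF
    have hzP : z ∈ gpoly ℓ bd := hext.1 hzF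
    obtain ⟨ε, hε, hεall⟩ :
        ∃ ε : ℝ, 0 < ε ∧ ∀ c, ℓ c z + ε * (ℓ c z - ℓ c y) ≤ bd c := by
      set A : Finset ι := Finset.univ.filter (fun c => 0 < ℓ c z - ℓ c y) with hA
      have hnotight : ∀ c ∈ A, ℓ c z < bd c := by
        intro c hcA
        have hd : 0 < ℓ c z - ℓ c y := (Finset.mem_filter.1 hcA).2
        refine lt_of_le_of_ne (hzP c) (fun hct => ?_)
        have h1 : ℓ c y = bd c := hy.2 c hct
        rw [h1, hct] at hd; linarith
      by_cases hAne : A.Nonempty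
      · set f : ι → ℝ := fun c => (bd c - ℓ c z) / (ℓ c z - ℓ c y) with hf
        set e := A.inf' hAne f with he
        have hepos : 0 < e := by
          rw [he, Finset.lt_inf'_iff]
          intro c hcA
          exact div_pos (by linarith [hnotight c hcA]) (Finset.mem_filter.1 hcA).2
        refine ⟨e, hepos, fun c => ?_⟩
        by_cases hc : 0 < ℓ c z - ℓ c y
        · have hcA : c ∈ A := Finset.mem_filter.2 ⟨Finset.mem_univ _, hc⟩
          have hle : e ≤ f c := Finset.inf'_le f hcA
          have := mul_le_mul_of_nonneg_right hle (le_of_lt hc)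
          rw [hf, div_mul_cancel₀] at this
          · linarith
          · linarith
        · push_neg at hc
          have h1 := hzP c
          nlinarith
      · refine ⟨1, one_pos, fun c => ?_⟩
        have hcA : c ∉ A := fun hc => hAne ⟨c, hc⟩
        rw [hA, Finset.mem_filter] at hcA
        push_neg at hcA
        have h2 := hcA (Finset.mem_univ c)
        have h1 := hzP c
        linarith
    set y' := z + ε • (z - y) with hy'
    have hy'P : y' ∈ gpoly ℓ bd := by
      intro c
      have : ℓ c y' = ℓ c z + ε * (ℓ c z - ℓ c y) := by
        simp [hy', map_add, map_smul, map_sub, smul_eq_mul]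
      rw [this]; exact hεall c
    have hseg : z ∈ openSegment ℝ y y' := by
      refine ⟨ε / (1 + ε), 1 / (1 + ε), by positivity, by positivity, ?_, ?_⟩
      · field_simp
        ring
      · rw [hy']
        have h1ε : (1 + ε) ≠ 0 := by positivity
        match_scalars <;> field_simp <;> ring
    exact hext.2 hy.1 hy'P hzF hseg

noncomputable def gfaceMap :
    WithBot ({S : Set ι // ∃ y ∈ gpoly ℓ bd, gtight ℓ bd y = S}ᵒᵈ) →
      {F : Set V // Convex ℝ F ∧ IsExtreme ℝ (gpoly ℓ bd) F} :=
  WithBot.recBotCoe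
    ⟨∅, convex_empty, ⟨Set.empty_subset _, fun _ _ _ _ _ h _ => absurd h (Set.notMem_empty _)⟩⟩
    (fun S => ⟨gface ℓ bd (OrderDual.ofDual S).1, gface_convex ℓ bd _, gface_extreme ℓ bd _⟩)

lemma gface_wit (S : {S : Set ι // ∃ y ∈ gpoly ℓ bd, gtight ℓ bd y = S}) :
    ∃ z, z ∈ gface ℓ bd S.1 ∧ gtight ℓ bd z = S.1 := by
  obtain ⟨S, z, hzP, rfl⟩ := S
  exact ⟨z, ⟨hzP, fun c hc => hc⟩, rfl⟩

lemma gfaceMap_le_iff (A B : WithBot ({S : Set ι // ∃ y ∈ gpoly ℓ bd, gtight ℓ bd y = S}ᵒᵈ)) :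
    gfaceMap ℓ bd A ≤ gfaceMap ℓ bd B ↔ A ≤ B := by
  induction A using WithBot.recBotCoe with
  | bot =>
    simp only [bot_le, iff_true]
    exact Set.empty_subset _
  | coe S =>
    induction B using WithBot.recBotCoe with
    | bot =>
      constructor
      · intro h
        obtain ⟨z, hz, _⟩ := gface_wit ℓ bd (OrderDual.ofDual S)
        exact absurd (h hz) (Set.notMem_empty _)
      · intro h; exact absurd h (WithBot.not_coe_le_bot _)
    | coe S' =>
      rw [WithBot.coe_le_coe]
      constructor
      · intro h
        show (OrderDual.ofDual S').1 ⊆ (OrderDual.ofDual S).1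
        obtain ⟨z, hz, hzt⟩ := gface_wit ℓ bd (OrderDual.ofDual S)
        have hz' : z ∈ gface ℓ bd (OrderDual.ofDual S').1 := h hz
        intro c hc
        exact hzt ▸ (hz'.2 c hc)
      · intro h
        have h' : (OrderDual.ofDual S').1 ⊆ (OrderDual.ofDual S).1 := h
        intro y hy
        exact ⟨hy.1, fun c hc => hy.2 c (h' hc)⟩

lemma gfaceMap_surj : Function.Surjective (gfaceMap ℓ bd) := by
  rintro ⟨F, hconv, hext⟩
  rcases Set.eq_empty_or_nonempty F with h | h
  · exact ⟨⊥, Subtype.ext h.symm⟩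
  · obtain ⟨z, hzF, hFeq⟩ := extreme_eq_gface ℓ bd hconv hext h
    exact ⟨(OrderDual.toDual ⟨gtight ℓ bd z, ⟨z, hext.1 hzF, rfl⟩⟩ :
      ({S : Set ι // ∃ y ∈ gpoly ℓ bd, gtight ℓ bd y = S}ᵒᵈ)), Subtype.ext hFeq.symm⟩

noncomputable def gfacesOrderIso :
    {F : Set V // Convex ℝ F ∧ IsExtreme ℝ (gpoly ℓ bd) F} ≃o
      WithBot ({S : Set ι // ∃ y ∈ gpoly ℓ bd, gtight ℓ bd y = S}ᵒᵈ) := by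
  have hinj : Function.Injective (gfaceMap ℓ bd) := by
    intro A B h
    exact le_antisymm ((gfaceMap_le_iff ℓ bd A B).1 h.le) ((gfaceMap_le_iff ℓ bd B A).1 h.ge)
  exact (RelIso.mk (Equiv.ofBijective _ ⟨hinj, gfaceMap_surj ℓ bd⟩)
    (fun {a b} => gfaceMap_le_iff ℓ bd a b)).symm

end Generic


/-- partial sum of the first `t` coordinates -/
def PS {N : ℕ} (y : Fin N → ℝ) (t : ℕ) : ℝ :=
  ∑ j ∈ Finset.univ.filter (fun j : Fin N => (j : ℕ) < t), y j

lemma PS_zero {N : ℕ} (y : Fin N → ℝ) : PS y 0 = 0 := by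
  simp [PS]

lemma PS_succ {N : ℕ} (y : Fin N → ℝ) {t : ℕ} (ht : t < N) :
    PS y (t + 1) = PS y t + y ⟨t, ht⟩ := by
  rw [PS, PS]
  rw [show Finset.univ.filter (fun j : Fin N => (j : ℕ) < t + 1)
      = insert (⟨t, ht⟩ : Fin N) (Finset.univ.filter (fun j : Fin N => (j : ℕ) < t)) by
    ext j
    simp only [Finset.mem_filter, Finset.mem_univ, true_and, Finset.mem_insert]
    constructor
    · intro h
      rcases Nat.lt_succ_iff_lt_or_eq.1 h with h | h
      · exact Or.inr h
      · exact Or.inl (Fin.ext h)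
    · rintro (rfl | h)
      · simp
      · omega]
  rw [Finset.sum_insert (by simp)]
  ring

lemma PS_univ {N : ℕ} (y : Fin N → ℝ) : PS y N = ∑ v, y v := by
  rw [PS]
  apply Finset.sum_congr _ (fun _ _ => rfl)
  ext j; simp [j.2]

lemma PS_mono {N : ℕ} {y : Fin N → ℝ} (hy : ∀ v, 0 ≤ y v) : Monotone (PS y) := by
  intro t t' htt
  apply Finset.sum_le_sum_of_subset_of_nonneg
  · intro j hj
    simp only [Finset.mem_filter, Finset.mem_univ, true_and] at hj ⊢
    omega
  · intro j _ _; exact hy j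

lemma PS_eq_Iic {N : ℕ} (y : Fin N → ℝ) (m : Fin N) :
    ∑ j ∈ Finset.Iic m, y j = PS y ((m : ℕ) + 1) := by
  apply Finset.sum_congr _ (fun _ _ => rfl)
  ext j
  simp only [Finset.mem_Iic, Finset.mem_filter, Finset.mem_univ, true_and]
  rw [Fin.le_def]
  omega

lemma PS_add {N : ℕ} (y : Fin N → ℝ) (c : ℕ) :
    ∀ (w : ℕ) (hw : c + w ≤ N),
      PS y (c + w) = PS y c + ∑ v : Fin w, y ⟨c + v, by have := v.2; omega⟩ := by
  intro w
  induction w with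
  | zero => intro _; simp
  | succ w ih =>
    intro h
    have h1 : c + w < N := by omega
    have e1 : PS y (c + (w + 1)) = PS y (c + w) + y ⟨c + w, h1⟩ := by
      rw [show c + (w + 1) = (c + w) + 1 by ring]
      exact PS_succ y h1
    rw [e1, ih (by omega), Fin.sum_univ_castSucc]
    simp only [Fin.coe_castSucc, Fin.val_last]
    ring

section Blocks

variable {n k : ℕ} (x : Fin n → ℝ) (a : Fin (k + 1) → ℕ)

lemma a_le_n (halast : a (Fin.last k) = n) (hmono : StrictMono a) (i : Fin (k + 1)) :
    a i ≤ n := halast ▸ hmono.monotone (Fin.le_last i)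

lemma a_succ_le_n (halast : a (Fin.last k) = n) (hmono : StrictMono a) (i : Fin k) :
    a i.succ ≤ n := a_le_n a halast hmono _

lemma a_lt (hmono : StrictMono a) (i : Fin k) : a i.castSucc < a i.succ :=
  hmono (Fin.castSucc_lt_succ : i.castSucc < i.succ)

lemma a_pos (ha0 : a 0 = 0) (hmono : StrictMono a) (i : Fin k) : 0 < a i.succ := by
  have h1 : a 0 ≤ a i.castSucc := hmono.monotone (Fin.zero_le _)
  have := a_lt a hmono i
  omega

/-- the block of an index -/
lemma blk_exists (ha0 : a 0 = 0) (halast : a (Fin.last k) = n) (hmono : StrictMono a)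
    (m : Fin n) : ∃ i : Fin k, a i.castSucc ≤ (m : ℕ) ∧ (m : ℕ) < a i.succ := by
  classical
  have hk : 0 < k := by
    rcases Nat.eq_zero_or_pos k with rfl | h
    · have : a (Fin.last 0) = a 0 := rfl
      rw [halast, ha0] at this
      have h2 := m.2
      omega
    · exact h
  set F : Finset (Fin (k + 1)) := Finset.univ.filter (fun i => a i ≤ (m : ℕ)) with hF
  have hFne : F.Nonempty := ⟨0, by simp [hF, ha0]⟩
  set i0 := F.max' hFne with hi0
  have hi0mem : i0 ∈ F := F.max'_mem hFne
  have hi0le : a i0 ≤ (m : ℕ) := (Finset.mem_filter.1 hi0mem).2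
  have hi0lt : (i0 : ℕ) < k := by
    by_contra h
    have : i0 = Fin.last k := by
      apply Fin.ext
      have := i0.2
      simp only [Fin.val_last]
      omega
    rw [this, halast] at hi0le
    have := m.2
    omega
  refine ⟨⟨i0, hi0lt⟩, ?_, ?_⟩
  · have : Fin.castSucc ⟨(i0 : ℕ), hi0lt⟩ = i0 := by apply Fin.ext; simp
    rw [this]; exact hi0le
  · by_contra h
    push_neg at h
    have hmem : (Fin.succ ⟨(i0 : ℕ), hi0lt⟩) ∈ F := Finset.mem_filter.2 ⟨Finset.mem_univ _, h⟩
    have := F.le_max' _ hmem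
    rw [← hi0] at this
    rw [Fin.le_def] at this
    simp only [Fin.val_succ] at this
    omega

lemma blk_unique (hmono : StrictMono a) {m : Fin n} {i j : Fin k}
    (hi1 : a i.castSucc ≤ (m : ℕ)) (hi2 : (m : ℕ) < a i.succ)
    (hj1 : a j.castSucc ≤ (m : ℕ)) (hj2 : (m : ℕ) < a j.succ) : i = j := by
  by_contra h
  rcases Ne.lt_or_gt h with h | h
  · have : a i.succ ≤ a j.castSucc := hmono.monotone (by
      rw [Fin.le_def]
      simp only [Fin.val_succ, Fin.coe_castSucc]
      exact h)
    omega
  · have : a j.succ ≤ a i.castSucc := hmono.monotone (by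
      rw [Fin.le_def]
      simp only [Fin.val_succ, Fin.coe_castSucc]
      exact h)
    omega

noncomputable def blk (ha0 : a 0 = 0) (halast : a (Fin.last k) = n) (hmono : StrictMono a)
    (m : Fin n) : Fin k := (blk_exists a ha0 halast hmono m).choose

lemma blk_spec (ha0 : a 0 = 0) (halast : a (Fin.last k) = n) (hmono : StrictMono a)
    (m : Fin n) : a (blk a ha0 halast hmono m).castSucc ≤ (m : ℕ) ∧
      (m : ℕ) < a (blk a ha0 halast hmono m).succ :=
  (blk_exists a ha0 halast hmono m).choose_spec

lemma blk_eq (ha0 : a 0 = 0) (halast : a (Fin.last k) = n) (hmono : StrictMono a)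
    {m : Fin n} {i : Fin k} (h1 : a i.castSucc ≤ (m : ℕ)) (h2 : (m : ℕ) < a i.succ) :
    blk a ha0 halast hmono m = i :=
  blk_unique a hmono (blk_spec a ha0 halast hmono m).1 (blk_spec a ha0 halast hmono m).2 h1 h2

end Blocks


noncomputable section Spec
variable {n k : ℕ} (x : Fin n → ℝ) (a : Fin (k + 1) → ℕ)

def L1 (n : ℕ) : Fin n ⊕ Fin n → ((Fin n → ℝ) →ₗ[ℝ] ℝ) :=
  Sum.elim (fun m => -(LinearMap.proj m : ((_ : Fin n) → ℝ) →ₗ[ℝ] ℝ))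
    (fun m => ∑ j ∈ Finset.Iic m, (LinearMap.proj j : ((_ : Fin n) → ℝ) →ₗ[ℝ] ℝ))

def B1 : Fin n ⊕ Fin n → ℝ := Sum.elim (fun _ => 0) (fun m => ∑ j ∈ Finset.Iic m, x j)

lemma L1_inl (m : Fin n) (y : Fin n → ℝ) : L1 n (Sum.inl m) y = -(y m) := rfl

lemma L1_inr (m : Fin n) (y : Fin n → ℝ) : L1 n (Sum.inr m) y = PS y ((m : ℕ) + 1) := by
  rw [← PS_eq_Iic]
  simp [L1]

lemma B1_inr (m : Fin n) : B1 x (Sum.inr m) = PS x ((m : ℕ) + 1) := by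
  rw [← PS_eq_Iic]; rfl

lemma hset1 : {y : Fin n → ℝ | ∀ i : Fin n, 0 ≤ y i ∧
    ∑ j ∈ Finset.Iic i, y j ≤ ∑ j ∈ Finset.Iic i, x j} = gpoly (L1 n) (B1 x) := by
  ext y
  simp only [Set.mem_setOf_eq, gpoly]
  constructor
  · rintro h (m | m)
    · rw [L1_inl]
      have := (h m).1
      simp only [B1, Sum.elim_inl]
      linarith
    · rw [L1_inr, B1_inr, ← PS_eq_Iic, ← PS_eq_Iic]
      exact (h m).2
  · intro h m
    constructor
    · have := h (Sum.inl m)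
      rw [L1_inl] at this
      simp only [B1, Sum.elim_inl] at this
      linarith
    · have := h (Sum.inr m)
      rw [L1_inr, B1_inr] at this
      rw [PS_eq_Iic, PS_eq_Iic]
      exact this

def proj2 (i : Fin k) (v : Fin (a i.succ - a i.castSucc + 1)) :
    ((i : Fin k) → Fin (a i.succ - a i.castSucc + 1) → ℝ) →ₗ[ℝ] ℝ :=
  (LinearMap.proj (R := ℝ) (φ := fun _ : Fin (a i.succ - a i.castSucc + 1) => ℝ) v).comp
    (LinearMap.proj (φ := fun i : Fin k => Fin (a i.succ - a i.castSucc + 1) → ℝ) i)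

def L2 : ((Σ i : Fin k, Fin (a i.succ - a i.castSucc + 1)) ⊕ (Fin k ⊕ Fin k)) →
    (((i : Fin k) → Fin (a i.succ - a i.castSucc + 1) → ℝ) →ₗ[ℝ] ℝ) :=
  Sum.elim (fun p => -(proj2 a p.1 p.2))
    (Sum.elim (fun i => ∑ v, proj2 a i v)
      (fun i => -∑ v, proj2 a i v))

def B2 : ((Σ i : Fin k, Fin (a i.succ - a i.castSucc + 1)) ⊕ (Fin k ⊕ Fin k)) → ℝ :=
  Sum.elim (fun _ => 0) (Sum.elim (fun _ => 1) (fun _ => -1))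

lemma L2_inl (p) (s : (i : Fin k) → Fin (a i.succ - a i.castSucc + 1) → ℝ) :
    L2 a (Sum.inl p) s = -(s p.1 p.2) := by
  simp [L2, proj2]

lemma L2_inr1 (i : Fin k) (s : (i : Fin k) → Fin (a i.succ - a i.castSucc + 1) → ℝ) :
    L2 a (Sum.inr (Sum.inl i)) s = ∑ v, s i v := by
  simp [L2, proj2]

lemma L2_inr2 (i : Fin k) (s : (i : Fin k) → Fin (a i.succ - a i.castSucc + 1) → ℝ) :
    L2 a (Sum.inr (Sum.inr i)) s = -∑ v, s i v := by
  simp [L2, proj2]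

lemma hset2 : Set.univ.pi (fun i : Fin k => stdSimplex ℝ (Fin (a i.succ - a i.castSucc + 1)))
    = gpoly (L2 a) (B2 a) := by
  ext s
  simp only [Set.mem_pi, Set.mem_univ, forall_true_left, stdSimplex, Set.mem_setOf_eq, gpoly]
  constructor
  · rintro h (⟨i, v⟩ | (i | i))
    · rw [L2_inl]
      have := (h i).1 v
      simp only [B2, Sum.elim_inl]
      linarith
    · rw [L2_inr1]
      simp only [B2, Sum.elim_inr, Sum.elim_inl]
      exact le_of_eq (h i).2
    · rw [L2_inr2]
      simp only [B2, Sum.elim_inr]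
      have := (h i).2
      linarith
  · intro h i
    constructor
    · intro v
      have := h (Sum.inl ⟨i, v⟩)
      rw [L2_inl] at this
      simp only [B2, Sum.elim_inl] at this
      linarith
    · have h1 := h (Sum.inr (Sum.inl i))
      have h2 := h (Sum.inr (Sum.inr i))
      rw [L2_inr1] at h1
      rw [L2_inr2] at h2
      simp only [B2, Sum.elim_inr, Sum.elim_inl] at h1 h2
      linarith

-- membership consequences
lemma poly1_nonneg {y : Fin n → ℝ} (h : y ∈ gpoly (L1 n) (B1 x)) (m : Fin n) : 0 ≤ y m := by
  have := h (Sum.inl m)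
  rw [L1_inl] at this
  simp only [B1, Sum.elim_inl] at this
  linarith

lemma poly1_PS {y : Fin n → ℝ} (h : y ∈ gpoly (L1 n) (B1 x)) {t : ℕ} (ht : t ≤ n) :
    PS y t ≤ PS x t := by
  rcases t with _ | t
  · rw [PS_zero, PS_zero]
  · have h2 := h (Sum.inr ⟨t, by omega⟩)
    rw [L1_inr, B1_inr] at h2
    exact h2

lemma tight1_inl {y : Fin n → ℝ} (m : Fin n) :
    Sum.inl m ∈ gtight (L1 n) (B1 x) y ↔ y m = 0 := by
  show L1 n (Sum.inl m) y = B1 x (Sum.inl m) ↔ _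
  rw [L1_inl]
  simp only [B1, Sum.elim_inl]
  constructor <;> intro h <;> linarith

lemma tight1_inr {y : Fin n → ℝ} (m : Fin n) :
    Sum.inr m ∈ gtight (L1 n) (B1 x) y ↔ PS y ((m : ℕ) + 1) = PS x ((m : ℕ) + 1) := by
  show L1 n (Sum.inr m) y = B1 x (Sum.inr m) ↔ _
  rw [L1_inr, B1_inr]

lemma poly2_nonneg {s : (i : Fin k) → Fin (a i.succ - a i.castSucc + 1) → ℝ}
    (h : s ∈ gpoly (L2 a) (B2 a)) (i : Fin k) (v) : 0 ≤ s i v := by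
  have := h (Sum.inl ⟨i, v⟩)
  rw [L2_inl] at this
  simp only [B2, Sum.elim_inl] at this
  linarith

lemma poly2_sum {s : (i : Fin k) → Fin (a i.succ - a i.castSucc + 1) → ℝ}
    (h : s ∈ gpoly (L2 a) (B2 a)) (i : Fin k) : ∑ v, s i v = 1 := by
  have h1 := h (Sum.inr (Sum.inl i))
  have h2 := h (Sum.inr (Sum.inr i))
  rw [L2_inr1] at h1
  rw [L2_inr2] at h2
  simp only [B2, Sum.elim_inr, Sum.elim_inl] at h1 h2
  linarith

lemma tight2_inl {s : (i : Fin k) → Fin (a i.succ - a i.castSucc + 1) → ℝ} (p) :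
    Sum.inl p ∈ gtight (L2 a) (B2 a) s ↔ s p.1 p.2 = 0 := by
  show L2 a (Sum.inl p) s = B2 a (Sum.inl p) ↔ _
  rw [L2_inl]
  simp only [B2, Sum.elim_inl]
  constructor <;> intro h <;> linarith

lemma tight2_inr {s : (i : Fin k) → Fin (a i.succ - a i.castSucc + 1) → ℝ}
    (h : s ∈ gpoly (L2 a) (B2 a)) (c : Fin k ⊕ Fin k) :
    Sum.inr c ∈ gtight (L2 a) (B2 a) s := by
  rcases c with i | i
  · show L2 a (Sum.inr (Sum.inl i)) s = B2 a _
    rw [L2_inr1, poly2_sum a h]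
    rfl
  · show L2 a (Sum.inr (Sum.inr i)) s = B2 a _
    rw [L2_inr2, poly2_sum a h]
    rfl

end Spec
noncomputable section Spec3
variable {n k : ℕ} (x : Fin n → ℝ) (a : Fin (k + 1) → ℕ)

lemma x_zero (hx : ∀ i, 0 ≤ x i)
    (hblock : ∀ m : Fin n, 0 < x m ↔ ∃ i : Fin k, (m : ℕ) = a i.castSucc)
    {m : Fin n} (h : ∀ i : Fin k, (m : ℕ) ≠ a i.castSucc) : x m = 0 := by
  have h2 : ¬ 0 < x m := fun hp => by
    obtain ⟨i, hi⟩ := (hblock m).1 hp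
    exact h i hi
  have := hx m
  linarith

lemma succ_le_castSucc {i l : Fin k} (h : i < l) : (i.succ : Fin (k+1)) ≤ l.castSucc := by
  rw [Fin.le_def]
  simp only [Fin.val_succ, Fin.coe_castSucc]
  exact h

lemma U_const (hx : ∀ i, 0 ≤ x i) (halast : a (Fin.last k) = n) (hmono : StrictMono a)
    (hblock : ∀ m : Fin n, 0 < x m ↔ ∃ i : Fin k, (m : ℕ) = a i.castSucc)
    (i : Fin k) {t : ℕ} (h1 : a i.castSucc < t) (h2 : t ≤ a i.succ) :
    PS x t = PS x (a i.succ) := by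
  have claim : ∀ t, a i.castSucc + 1 ≤ t → t ≤ a i.succ → PS x t = PS x (a i.castSucc + 1) := by
    intro t ht
    induction t, ht using Nat.le_induction with
    | base => intro _; rfl
    | succ t ht ih =>
      intro h2
      have htn : t < n := lt_of_lt_of_le (by omega) (a_succ_le_n a halast hmono i)
      have hxz : x ⟨t, htn⟩ = 0 := by
        apply x_zero x a hx hblock
        intro l hl
        simp only at hl
        have hil : i < l := by
          have : a i.castSucc < a l.castSucc := by omega
          have := hmono.lt_iff_lt.1 this
          rwa [Fin.castSucc_lt_castSucc_iff] at this
        have := hmono.monotone (succ_le_castSucc hil)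
        omega
      rw [PS_succ x htn, hxz, add_zero, ih (by omega)]
  have hlt := a_lt a hmono i
  rw [claim t (by omega) h2, claim (a i.succ) (by omega) (le_refl _)]

lemma Lltc (hx : ∀ i, 0 ≤ x i) (halast : a (Fin.last k) = n) (hmono : StrictMono a)
    (hblock : ∀ m : Fin n, 0 < x m ↔ ∃ i : Fin k, (m : ℕ) = a i.castSucc) (i : Fin k) :
    PS x (a i.castSucc) < PS x (a i.succ) := by
  have hlt := a_lt a hmono i
  have hcn : a i.castSucc < n := lt_of_lt_of_le hlt (a_succ_le_n a halast hmono i)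
  have h1 : PS x (a i.castSucc + 1) = PS x (a i.castSucc) + x ⟨a i.castSucc, hcn⟩ :=
    PS_succ x hcn
  have hxpos : 0 < x ⟨a i.castSucc, hcn⟩ := (hblock _).2 ⟨i, rfl⟩
  have h2 := PS_mono hx (show a i.castSucc + 1 ≤ a i.succ by omega)
  linarith

lemma denpos (hx : ∀ i, 0 ≤ x i) (halast : a (Fin.last k) = n) (hmono : StrictMono a)
    (hblock : ∀ m : Fin n, 0 < x m ↔ ∃ i : Fin k, (m : ℕ) = a i.castSucc)
    {y : Fin n → ℝ} (hy : y ∈ gpoly (L1 n) (B1 x)) (i : Fin k) :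
    PS y (a i.castSucc) < PS x (a i.succ) := by
  have h1 : PS y (a i.castSucc) ≤ PS x (a i.castSucc) := by
    apply poly1_PS x hy
    have := a_lt a hmono i
    have := a_succ_le_n a halast hmono i
    omega
  have := Lltc x a hx halast hmono hblock i
  linarith

def endIdx (ha0 : a 0 = 0) (halast : a (Fin.last k) = n) (hmono : StrictMono a) (i : Fin k) :
    Fin n :=
  ⟨a i.succ - 1, by
    have := a_pos a ha0 hmono i
    have := a_succ_le_n a halast hmono i
    omega⟩

lemma tight1_struct (hx : ∀ i, 0 ≤ x i) (ha0 : a 0 = 0) (halast : a (Fin.last k) = n)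
    (hmono : StrictMono a)
    (hblock : ∀ m : Fin n, 0 < x m ↔ ∃ i : Fin k, (m : ℕ) = a i.castSucc)
    {y : Fin n → ℝ} (hy : y ∈ gpoly (L1 n) (B1 x)) (m : Fin n) (i : Fin k)
    (h1 : a i.castSucc ≤ (m : ℕ)) (h2 : (m : ℕ) < a i.succ) :
    Sum.inr m ∈ gtight (L1 n) (B1 x) y ↔
      (Sum.inr (endIdx a ha0 halast hmono i) ∈ gtight (L1 n) (B1 x) y ∧
        ∀ j : Fin n, (m : ℕ) < (j : ℕ) → (j : ℕ) < a i.succ → y j = 0) := by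
  have hyn := poly1_nonneg x hy
  have hsn := a_succ_le_n a halast hmono i
  have hsp := a_pos a ha0 hmono i
  have he1 : ((endIdx a ha0 halast hmono i : Fin n) : ℕ) + 1 = a i.succ := by
    simp only [endIdx]
    omega
  have hUc : PS x ((m : ℕ) + 1) = PS x (a i.succ) :=
    U_const x a hx halast hmono hblock i (by omega) (by omega)
  rw [tight1_inr, tight1_inr, he1]
  constructor
  · intro h
    have hc : PS y ((m : ℕ) + 1) = PS x (a i.succ) := by rw [h, hUc]
    have hyle := poly1_PS x hy (le_refl n)
    have hPSe : PS y (a i.succ) = PS x (a i.succ) := by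
      have hle : PS y (a i.succ) ≤ PS x (a i.succ) := poly1_PS x hy hsn
      have hge : PS x (a i.succ) ≤ PS y (a i.succ) := by
        rw [← hc]
        exact PS_mono hyn (by omega)
      linarith
    refine ⟨hPSe, fun j hj1 hj2 => ?_⟩
    have e1 : PS y (j : ℕ) = PS x (a i.succ) := by
      have hle : PS y (j : ℕ) ≤ PS y (a i.succ) := PS_mono hyn (by omega)
      have hge : PS x (a i.succ) ≤ PS y (j : ℕ) := by
        rw [← hc]
        exact PS_mono hyn (by omega)
      linarith
    have e2 : PS y ((j : ℕ) + 1) = PS x (a i.succ) := by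
      have hle : PS y ((j : ℕ) + 1) ≤ PS y (a i.succ) := PS_mono hyn (by omega)
      have hge : PS x (a i.succ) ≤ PS y ((j : ℕ) + 1) := by
        rw [← hc]
        exact PS_mono hyn (by omega)
      linarith
    have e3 : PS y ((j : ℕ) + 1) = PS y (j : ℕ) + y j := by
      have := PS_succ y j.2
      simpa using this
    rw [e1, e2] at e3
    linarith
  · rintro ⟨hend, hz⟩
    have claim : ∀ u, (m : ℕ) + 1 ≤ u → u ≤ a i.succ → PS y u = PS y ((m : ℕ) + 1) := by
      intro u hu
      induction u, hu using Nat.le_induction with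
      | base => intro _; rfl
      | succ u hu ih =>
        intro h2'
        have hun : u < n := by omega
        have hyz : y ⟨u, hun⟩ = 0 := hz ⟨u, hun⟩ (by simp only [Fin.val_mk]; omega) (by simp only [Fin.val_mk]; omega)
        rw [PS_succ y hun, hyz, add_zero, ih (by omega)]
    have := claim (a i.succ) (by omega) (le_refl _)
    rw [hUc, ← hend, this]
end Spec3
noncomputable section Spec4
variable {n k : ℕ} (x : Fin n → ℝ) (a : Fin (k + 1) → ℕ)

def midIdx (halast : a (Fin.last k) = n) (hmono : StrictMono a) (i : Fin k) (v : ℕ)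
    (h : v < a i.succ - a i.castSucc) : Fin n :=
  ⟨a i.castSucc + v, by have := a_succ_le_n a halast hmono i; omega⟩

lemma endIdx_val (ha0 : a 0 = 0) (halast : a (Fin.last k) = n) (hmono : StrictMono a)
    (i : Fin k) : ((endIdx a ha0 halast hmono i : Fin n) : ℕ) + 1 = a i.succ := by
  have := a_pos a ha0 hmono i
  simp only [endIdx]
  omega

def gmapSet (ha0 : a 0 = 0) (halast : a (Fin.last k) = n) (hmono : StrictMono a)
    (S : Set (Fin n ⊕ Fin n)) :
    Set ((Σ i : Fin k, Fin (a i.succ - a i.castSucc + 1)) ⊕ (Fin k ⊕ Fin k)) :=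
  {c | match c with
    | Sum.inl p =>
        if h : (p.2 : ℕ) < a p.1.succ - a p.1.castSucc
        then Sum.inl (midIdx a halast hmono p.1 p.2 h) ∈ S
        else Sum.inr (endIdx a ha0 halast hmono p.1) ∈ S
    | Sum.inr _ => True}

lemma gmapSet_inl (ha0 : a 0 = 0) (halast : a (Fin.last k) = n) (hmono : StrictMono a)
    (S : Set (Fin n ⊕ Fin n)) (p : Σ i : Fin k, Fin (a i.succ - a i.castSucc + 1)) :
    Sum.inl p ∈ gmapSet a ha0 halast hmono S ↔
      (if h : (p.2 : ℕ) < a p.1.succ - a p.1.castSucc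
        then Sum.inl (midIdx a halast hmono p.1 p.2 h) ∈ S
        else Sum.inr (endIdx a ha0 halast hmono p.1) ∈ S) := Iff.rfl

lemma gmapSet_inr (ha0 : a 0 = 0) (halast : a (Fin.last k) = n) (hmono : StrictMono a)
    (S : Set (Fin n ⊕ Fin n)) (c : Fin k ⊕ Fin k) :
    Sum.inr c ∈ gmapSet a ha0 halast hmono S := by
  rcases c with i | i <;> trivial

lemma gmapSet_mono (ha0 : a 0 = 0) (halast : a (Fin.last k) = n) (hmono : StrictMono a)
    {S S' : Set (Fin n ⊕ Fin n)} (h : S ⊆ S') :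
    gmapSet a ha0 halast hmono S ⊆ gmapSet a ha0 halast hmono S' := by
  intro c hc
  rcases c with p | c
  · rw [gmapSet_inl] at hc ⊢
    split at hc
    next h' => rw [dif_pos h']; exact h hc
    next h' => rw [dif_neg h']; exact h hc
  · exact gmapSet_inr a ha0 halast hmono S' c

def sden (y : Fin n → ℝ) (i : Fin k) : ℝ := PS x (a i.succ) - PS y (a i.castSucc)

def sNum (halast : a (Fin.last k) = n) (hmono : StrictMono a) (y : Fin n → ℝ)
    (i : Fin k) (v : Fin (a i.succ - a i.castSucc + 1)) : ℝ :=
  if h : (v : ℕ) < a i.succ - a i.castSucc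
  then y (midIdx a halast hmono i v h)
  else PS x (a i.succ) - PS y (a i.succ)

def sMap (halast : a (Fin.last k) = n) (hmono : StrictMono a) (y : Fin n → ℝ) :
    (i : Fin k) → Fin (a i.succ - a i.castSucc + 1) → ℝ :=
  fun i v => sNum x a halast hmono y i v / sden x a y i

lemma sden_pos (hx : ∀ i, 0 ≤ x i) (halast : a (Fin.last k) = n) (hmono : StrictMono a)
    (hblock : ∀ m : Fin n, 0 < x m ↔ ∃ i : Fin k, (m : ℕ) = a i.castSucc)
    {y : Fin n → ℝ} (hy : y ∈ gpoly (L1 n) (B1 x)) (i : Fin k) : 0 < sden x a y i := by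
  have := denpos x a hx halast hmono hblock hy i
  simp only [sden]
  linarith

lemma block_sum (halast : a (Fin.last k) = n) (hmono : StrictMono a) (y : Fin n → ℝ)
    (i : Fin k) :
    ∑ v : Fin (a i.succ - a i.castSucc), y (midIdx a halast hmono i v v.2) =
      PS y (a i.succ) - PS y (a i.castSucc) := by
  have hlt := a_lt a hmono i
  have hsn := a_succ_le_n a halast hmono i
  have hb : a i.castSucc + (a i.succ - a i.castSucc) = a i.succ := by omega
  have h := PS_add y (a i.castSucc) (a i.succ - a i.castSucc) (by omega)
  have h2 : PS y (a i.succ) = PS y (a i.castSucc + (a i.succ - a i.castSucc)) := by rw [hb]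
  have e : ∑ v : Fin (a i.succ - a i.castSucc), y (midIdx a halast hmono i v v.2) =
      ∑ v : Fin (a i.succ - a i.castSucc), y ⟨a i.castSucc + (v : ℕ), by have := v.2; omega⟩ := by
    apply Finset.sum_congr rfl
    intro v _
    congr 1
  rw [e, h2, h]
  ring

lemma sNum_sum (halast : a (Fin.last k) = n) (hmono : StrictMono a) (y : Fin n → ℝ)
    (i : Fin k) : ∑ v, sNum x a halast hmono y i v = sden x a y i := by
  rw [Fin.sum_univ_castSucc]
  have h1 : ∀ v : Fin (a i.succ - a i.castSucc),
      sNum x a halast hmono y i v.castSucc = y (midIdx a halast hmono i v v.2) := by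
    intro v
    rw [sNum, dif_pos (by simpa using v.2)]
    congr 1
  have h2 : sNum x a halast hmono y i (Fin.last _) = PS x (a i.succ) - PS y (a i.succ) := by
    rw [sNum, dif_neg (by simp)]
  rw [h2, Finset.sum_congr rfl (fun v _ => h1 v), block_sum a halast hmono y i]
  simp only [sden]
  ring

lemma sMap_mem (hx : ∀ i, 0 ≤ x i) (halast : a (Fin.last k) = n) (hmono : StrictMono a)
    (hblock : ∀ m : Fin n, 0 < x m ↔ ∃ i : Fin k, (m : ℕ) = a i.castSucc)
    {y : Fin n → ℝ} (hy : y ∈ gpoly (L1 n) (B1 x)) :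
    sMap x a halast hmono y ∈ gpoly (L2 a) (B2 a) := by
  have hden := sden_pos x a hx halast hmono hblock hy
  have hnum : ∀ i v, 0 ≤ sNum x a halast hmono y i v := by
    intro i v
    rw [sNum]
    split
    · exact poly1_nonneg x hy _
    · have := poly1_PS x hy (a_succ_le_n a halast hmono i)
      linarith
  have hsum : ∀ i, ∑ v, sMap x a halast hmono y i v = 1 := by
    intro i
    rw [show ∑ v, sMap x a halast hmono y i v
        = (∑ v, sNum x a halast hmono y i v) / sden x a y i from
      (Finset.sum_div _ _ _).symm]
    rw [sNum_sum x a halast hmono y i]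
    exact div_self (ne_of_gt (hden i))
  rintro (⟨i, v⟩ | (i | i))
  · rw [L2_inl]
    have : 0 ≤ sMap x a halast hmono y i v := div_nonneg (hnum i v) (le_of_lt (hden i))
    simp only [B2, Sum.elim_inl]
    linarith
  · rw [L2_inr1, hsum i]
    simp [B2]
  · rw [L2_inr2, hsum i]
    simp [B2]

lemma sMap_tight (hx : ∀ i, 0 ≤ x i) (ha0 : a 0 = 0) (halast : a (Fin.last k) = n)
    (hmono : StrictMono a)
    (hblock : ∀ m : Fin n, 0 < x m ↔ ∃ i : Fin k, (m : ℕ) = a i.castSucc)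
    {y : Fin n → ℝ} (hy : y ∈ gpoly (L1 n) (B1 x)) :
    gtight (L2 a) (B2 a) (sMap x a halast hmono y) =
      gmapSet a ha0 halast hmono (gtight (L1 n) (B1 x) y) := by
  have hden := sden_pos x a hx halast hmono hblock hy
  ext c
  rcases c with p | c
  · obtain ⟨i, v⟩ := p
    rw [tight2_inl, gmapSet_inl]
    have hz : sMap x a halast hmono y i v = 0 ↔ sNum x a halast hmono y i v = 0 := by
      rw [sMap, div_eq_zero_iff]
      have := hden i
      constructor
      · rintro (h | h)
        · exact h
        · linarith
      · exact Or.inl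
    show sMap x a halast hmono y (⟨i, v⟩ : Σ i, _).1 (⟨i, v⟩ : Σ i, _).2 = 0 ↔ _
    rw [hz, sNum]
    split
    next h =>
      rw [tight1_inl]
    next h =>
      rw [tight1_inr, endIdx_val a ha0 halast hmono i]
      constructor <;> intro h' <;> linarith
  · simp only [gmapSet_inr a ha0 halast hmono _ c, iff_true]
    exact tight2_inr a (sMap_mem x a hx halast hmono hblock hy) c
end Spec4
noncomputable section Spec5
variable {n k : ℕ} (x : Fin n → ℝ) (a : Fin (k + 1) → ℕ)

def Lr (s : (i : Fin k) → Fin (a i.succ - a i.castSucc + 1) → ℝ) : ℕ → ℝ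
  | 0 => 0
  | (j + 1) =>
      if h : j < k then
        Lr s j + (PS x (a (⟨j, h⟩ : Fin k).succ) - Lr s j) *
          (1 - s ⟨j, h⟩ (Fin.last _))
      else Lr s j

lemma Lr_zero (s : (i : Fin k) → Fin (a i.succ - a i.castSucc + 1) → ℝ) :
    Lr x a s 0 = 0 := rfl

lemma Lr_succ (s : (i : Fin k) → Fin (a i.succ - a i.castSucc + 1) → ℝ) {j : ℕ} (h : j < k) :
    Lr x a s (j + 1) = Lr x a s j + (PS x (a (⟨j, h⟩ : Fin k).succ) - Lr x a s j) *
      (1 - s ⟨j, h⟩ (Fin.last _)) := by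
  rw [Lr, dif_pos h]

lemma s_last_le_one {s : (i : Fin k) → Fin (a i.succ - a i.castSucc + 1) → ℝ}
    (hs : s ∈ gpoly (L2 a) (B2 a)) (i : Fin k) (v : Fin (a i.succ - a i.castSucc + 1)) :
    s i v ≤ 1 := by
  have h1 := poly2_sum a hs i
  have h2 : s i v ≤ ∑ w, s i w :=
    Finset.single_le_sum (fun w _ => poly2_nonneg a hs i w) (Finset.mem_univ v)
  linarith

lemma Lr_le (hx : ∀ i, 0 ≤ x i)
    (halast : a (Fin.last k) = n) (hmono : StrictMono a)
    {s : (i : Fin k) → Fin (a i.succ - a i.castSucc + 1) → ℝ}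
    (hs : s ∈ gpoly (L2 a) (B2 a)) :
    ∀ j (hj : j ≤ k), Lr x a s j ≤ PS x (a ⟨j, Nat.lt_succ_of_le hj⟩) := by
  intro j
  induction j with
  | zero =>
    intro hj
    have e : (⟨0, Nat.lt_succ_of_le hj⟩ : Fin (k + 1)) = 0 := rfl
    rw [Lr_zero, e]
    exact PS_zero x ▸ PS_mono hx (Nat.zero_le _)
  | succ j ih =>
    intro hj
    have hjk : j < k := hj
    set i : Fin k := ⟨j, hjk⟩ with hi
    have e1 : (⟨j, Nat.lt_succ_of_le (le_of_lt hjk)⟩ : Fin (k + 1)) = i.castSucc := rfl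
    have ihj := ih (le_of_lt hjk)
    rw [e1] at ihj
    have e2 : (⟨j + 1, Nat.lt_succ_of_le hj⟩ : Fin (k + 1)) = i.succ := rfl
    rw [e2, Lr_succ x a s hjk]
    have hcc : PS x (a i.castSucc) ≤ PS x (a i.succ) :=
      PS_mono hx (hmono.monotone (le_of_lt (Fin.castSucc_lt_succ : i.castSucc < i.succ)))
    have hθ1 : s i (Fin.last _) ≤ 1 := s_last_le_one a hs i _
    have hθ0 : 0 ≤ s i (Fin.last _) := poly2_nonneg a hs i _
    have hden : 0 ≤ PS x (a i.succ) - Lr x a s j := by linarith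
    nlinarith [mul_nonneg hden hθ0]

lemma Lr_lt (hx : ∀ i, 0 ≤ x i) (halast : a (Fin.last k) = n) (hmono : StrictMono a)
    (hblock : ∀ m : Fin n, 0 < x m ↔ ∃ i : Fin k, (m : ℕ) = a i.castSucc)
    {s : (i : Fin k) → Fin (a i.succ - a i.castSucc + 1) → ℝ}
    (hs : s ∈ gpoly (L2 a) (B2 a)) (i : Fin k) :
    Lr x a s (i : ℕ) < PS x (a i.succ) := by
  have h1 := Lr_le x a hx halast hmono hs (i : ℕ) (le_of_lt i.2)
  have e : (⟨(i : ℕ), Nat.lt_succ_of_le (le_of_lt i.2)⟩ : Fin (k + 1)) = i.castSucc := rfl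
  rw [e] at h1
  have := Lltc x a hx halast hmono hblock i
  linarith

def yMap (ha0 : a 0 = 0) (halast : a (Fin.last k) = n) (hmono : StrictMono a)
    (s : (i : Fin k) → Fin (a i.succ - a i.castSucc + 1) → ℝ) : Fin n → ℝ :=
  fun m =>
    (PS x (a (blk a ha0 halast hmono m).succ) - Lr x a s ((blk a ha0 halast hmono m) : ℕ)) *
      s (blk a ha0 halast hmono m)
        ⟨min ((m : ℕ) - a (blk a ha0 halast hmono m).castSucc)
          (a (blk a ha0 halast hmono m).succ - a (blk a ha0 halast hmono m).castSucc),
          Nat.lt_succ_of_le (Nat.min_le_right _ _)⟩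

lemma s_congr {s : (i : Fin k) → Fin (a i.succ - a i.castSucc + 1) → ℝ} {i i' : Fin k}
    (h : i = i') (v : Fin (a i.succ - a i.castSucc + 1))
    (v' : Fin (a i'.succ - a i'.castSucc + 1)) (hv : (v : ℕ) = (v' : ℕ)) :
    s i v = s i' v' := by
  subst h
  rw [Fin.ext hv]

lemma yMap_eq (ha0 : a 0 = 0) (halast : a (Fin.last k) = n) (hmono : StrictMono a)
    (s : (i : Fin k) → Fin (a i.succ - a i.castSucc + 1) → ℝ) (m : Fin n) (i : Fin k)
    (h1 : a i.castSucc ≤ (m : ℕ)) (h2 : (m : ℕ) < a i.succ) :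
    yMap x a ha0 halast hmono s m =
      (PS x (a i.succ) - Lr x a s (i : ℕ)) *
        s i ⟨(m : ℕ) - a i.castSucc, by omega⟩ := by
  have hbe : blk a ha0 halast hmono m = i := blk_eq a ha0 halast hmono h1 h2
  rw [yMap]
  have e2 : PS x (a (blk a ha0 halast hmono m).succ) -
      Lr x a s ((blk a ha0 halast hmono m) : ℕ) = PS x (a i.succ) - Lr x a s (i : ℕ) := by
    rw [hbe]
  rw [e2]
  congr 1
  apply s_congr a hbe
  simp only [Fin.val_mk]
  rw [hbe]
  omega
end Spec5
noncomputable section Spec6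
variable {n k : ℕ} (x : Fin n → ℝ) (a : Fin (k + 1) → ℕ)

lemma yPS_block (hx : ∀ i, 0 ≤ x i) (ha0 : a 0 = 0) (halast : a (Fin.last k) = n)
    (hmono : StrictMono a)
    {s : (i : Fin k) → Fin (a i.succ - a i.castSucc + 1) → ℝ} (i : Fin k)
    (hstart : PS (yMap x a ha0 halast hmono s) (a i.castSucc) = Lr x a s (i : ℕ)) :
    ∀ w, w ≤ a i.succ - a i.castSucc →
      PS (yMap x a ha0 halast hmono s) (a i.castSucc + w) =
        Lr x a s (i : ℕ) + (PS x (a i.succ) - Lr x a s (i : ℕ)) * PS (s i) w := by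
  intro w
  induction w with
  | zero =>
    intro _
    rw [Nat.add_zero, hstart, PS_zero]
    ring
  | succ w ih =>
    intro hw
    have hlt := a_lt a hmono i
    have hsn := a_succ_le_n a halast hmono i
    have hmn : a i.castSucc + w < n := by omega
    have e0 : a i.castSucc + (w + 1) = (a i.castSucc + w) + 1 := rfl
    rw [e0, PS_succ _ hmn, ih (by omega)]
    have hym : yMap x a ha0 halast hmono s ⟨a i.castSucc + w, hmn⟩ =
        (PS x (a i.succ) - Lr x a s (i : ℕ)) *
          s i ⟨w, by omega⟩ := by
      rw [yMap_eq x a ha0 halast hmono s ⟨a i.castSucc + w, hmn⟩ i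
        (by simp) (by simp; omega)]
      congr 1
      apply s_congr a rfl
      simp only [Fin.val_mk]
      omega
    rw [hym, PS_succ (s i) (show w < a i.succ - a i.castSucc + 1 by omega)]
    ring

lemma yPS_start (hx : ∀ i, 0 ≤ x i) (ha0 : a 0 = 0) (halast : a (Fin.last k) = n)
    (hmono : StrictMono a)
    {s : (i : Fin k) → Fin (a i.succ - a i.castSucc + 1) → ℝ}
    (hs : s ∈ gpoly (L2 a) (B2 a)) :
    ∀ j (hj : j ≤ k), PS (yMap x a ha0 halast hmono s) (a ⟨j, Nat.lt_succ_of_le hj⟩) =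
      Lr x a s j := by
  intro j
  induction j with
  | zero =>
    intro hj
    have e : (⟨0, Nat.lt_succ_of_le hj⟩ : Fin (k + 1)) = 0 := rfl
    rw [e, ha0, PS_zero, Lr_zero]
  | succ j ih =>
    intro hj
    have hjk : j < k := hj
    set i : Fin k := ⟨j, hjk⟩ with hidef
    have hstart : PS (yMap x a ha0 halast hmono s) (a i.castSucc) = Lr x a s (i : ℕ) :=
      ih (le_of_lt hjk)
    have hb := yPS_block x a hx ha0 halast hmono i hstart
      (a i.succ - a i.castSucc) (le_refl _)
    have e1 : a i.castSucc + (a i.succ - a i.castSucc) = a i.succ := by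
      have := a_lt a hmono i
      omega
    rw [e1] at hb
    have e2 : PS (s i) (a i.succ - a i.castSucc + 1) = 1 := by
      rw [PS_univ]
      exact poly2_sum a hs i
    have e3 := PS_succ (s i)
      (show a i.succ - a i.castSucc < a i.succ - a i.castSucc + 1 by omega)
    have e4 : (⟨a i.succ - a i.castSucc, by omega⟩ :
        Fin (a i.succ - a i.castSucc + 1)) = Fin.last _ := rfl
    have e6 : PS (s i) (a i.succ - a i.castSucc) = 1 - s i (Fin.last _) := by
      rw [e2, e4] at e3
      linarith
    have e5 : (⟨j + 1, Nat.lt_succ_of_le hj⟩ : Fin (k + 1)) = i.succ := rfl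
    rw [e5, Lr_succ x a s hjk, hb, e6]

lemma yPS_at (hx : ∀ i, 0 ≤ x i) (ha0 : a 0 = 0) (halast : a (Fin.last k) = n)
    (hmono : StrictMono a)
    {s : (i : Fin k) → Fin (a i.succ - a i.castSucc + 1) → ℝ}
    (hs : s ∈ gpoly (L2 a) (B2 a)) (i : Fin k) {t : ℕ}
    (h1 : a i.castSucc ≤ t) (h2 : t ≤ a i.succ) :
    PS (yMap x a ha0 halast hmono s) t =
      Lr x a s (i : ℕ) + (PS x (a i.succ) - Lr x a s (i : ℕ)) *
        PS (s i) (t - a i.castSucc) := by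
  have hstart : PS (yMap x a ha0 halast hmono s) (a i.castSucc) = Lr x a s (i : ℕ) := by
    have := yPS_start x a hx ha0 halast hmono hs (i : ℕ) (le_of_lt i.2)
    have e : (⟨(i : ℕ), Nat.lt_succ_of_le (le_of_lt i.2)⟩ : Fin (k + 1)) = i.castSucc := rfl
    rwa [e] at this
  have hb := yPS_block x a hx ha0 halast hmono i hstart (t - a i.castSucc) (by omega)
  rwa [show a i.castSucc + (t - a i.castSucc) = t by omega] at hb

lemma yMap_nonneg (hx : ∀ i, 0 ≤ x i) (ha0 : a 0 = 0) (halast : a (Fin.last k) = n)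
    (hmono : StrictMono a)
    (hblock : ∀ m : Fin n, 0 < x m ↔ ∃ i : Fin k, (m : ℕ) = a i.castSucc)
    {s : (i : Fin k) → Fin (a i.succ - a i.castSucc + 1) → ℝ}
    (hs : s ∈ gpoly (L2 a) (B2 a)) (m : Fin n) : 0 ≤ yMap x a ha0 halast hmono s m := by
  rw [yMap]
  apply mul_nonneg
  · have := Lr_lt x a hx halast hmono hblock hs (blk a ha0 halast hmono m)
    linarith
  · exact poly2_nonneg a hs _ _

lemma yMap_mem (hx : ∀ i, 0 ≤ x i) (ha0 : a 0 = 0) (halast : a (Fin.last k) = n)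
    (hmono : StrictMono a)
    (hblock : ∀ m : Fin n, 0 < x m ↔ ∃ i : Fin k, (m : ℕ) = a i.castSucc)
    {s : (i : Fin k) → Fin (a i.succ - a i.castSucc + 1) → ℝ}
    (hs : s ∈ gpoly (L2 a) (B2 a)) :
    yMap x a ha0 halast hmono s ∈ gpoly (L1 n) (B1 x) := by
  rintro (m | m)
  · rw [L1_inl]
    have := yMap_nonneg x a hx ha0 halast hmono hblock hs m
    simp only [B1, Sum.elim_inl]
    linarith
  · rw [L1_inr, B1_inr]
    obtain ⟨hsp1, hsp2⟩ := blk_spec a ha0 halast hmono m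
    set i := blk a ha0 halast hmono m with hidef
    have hPS := yPS_at x a hx ha0 halast hmono hs i
      (show a i.castSucc ≤ (m : ℕ) + 1 by omega) (show (m : ℕ) + 1 ≤ a i.succ by omega)
    have hden := Lr_lt x a hx halast hmono hblock hs i
    have hPSle : PS (s i) ((m : ℕ) + 1 - a i.castSucc) ≤ 1 := by
      have h1 : PS (s i) ((m : ℕ) + 1 - a i.castSucc) ≤
          PS (s i) (a i.succ - a i.castSucc + 1) :=
        PS_mono (poly2_nonneg a hs i) (by omega)
      rw [PS_univ, poly2_sum a hs i] at h1
      exact h1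
    have hU : PS x ((m : ℕ) + 1) = PS x (a i.succ) :=
      U_const x a hx halast hmono hblock i (by omega) (by omega)
    rw [hPS, hU]
    nlinarith [mul_le_mul_of_nonneg_left hPSle (le_of_lt (sub_pos.2 hden))]

lemma yMap_tight (hx : ∀ i, 0 ≤ x i) (ha0 : a 0 = 0) (halast : a (Fin.last k) = n)
    (hmono : StrictMono a)
    (hblock : ∀ m : Fin n, 0 < x m ↔ ∃ i : Fin k, (m : ℕ) = a i.castSucc)
    {s : (i : Fin k) → Fin (a i.succ - a i.castSucc + 1) → ℝ}
    (hs : s ∈ gpoly (L2 a) (B2 a)) :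
    gmapSet a ha0 halast hmono (gtight (L1 n) (B1 x) (yMap x a ha0 halast hmono s)) =
      gtight (L2 a) (B2 a) s := by
  ext c
  rcases c with ⟨i, v⟩ | c
  · rw [gmapSet_inl, tight2_inl]
    have hden := Lr_lt x a hx halast hmono hblock hs i
    have hdpos : 0 < PS x (a i.succ) - Lr x a s (i : ℕ) := by linarith
    by_cases h : (v : ℕ) < a i.succ - a i.castSucc
    · rw [dif_pos h, tight1_inl]
      have hym : yMap x a ha0 halast hmono s (midIdx a halast hmono i v h) =
          (PS x (a i.succ) - Lr x a s (i : ℕ)) * s i v := by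
        rw [yMap_eq x a ha0 halast hmono s (midIdx a halast hmono i v h) i
          (by simp [midIdx]) (by simp only [midIdx]; omega)]
        congr 1
        apply s_congr a rfl
        simp only [midIdx, Fin.val_mk]
        omega
      rw [hym]
      constructor
      · intro h'
        rcases mul_eq_zero.1 h' with h' | h'
        · linarith
        · exact h'
      · intro h'
        rw [h']
        ring
    · rw [dif_neg h, tight1_inr, endIdx_val a ha0 halast hmono i]
      have hlt := a_lt a hmono i
      have hPS := yPS_at x a hx ha0 halast hmono hs i
        (show a i.castSucc ≤ a i.succ by omega) (le_refl _)
      have e2 : PS (s i) (a i.succ - a i.castSucc + 1) = 1 := by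
        rw [PS_univ]
        exact poly2_sum a hs i
      have e3 := PS_succ (s i)
        (show a i.succ - a i.castSucc < a i.succ - a i.castSucc + 1 by omega)
      have e4 : (⟨a i.succ - a i.castSucc, by omega⟩ :
          Fin (a i.succ - a i.castSucc + 1)) = Fin.last _ := rfl
      have e6 : PS (s i) (a i.succ - a i.castSucc) = 1 - s i (Fin.last _) := by
        rw [e2, e4] at e3
        linarith
      have hvl : v = Fin.last _ := by
        apply Fin.ext
        have := v.2
        simp only [Fin.val_last]
        omega
      rw [hPS, e6, hvl]
      constructor
      · intro h'
        have : (PS x (a i.succ) - Lr x a s (i : ℕ)) * s i (Fin.last _) = 0 := by nlinarith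
        rcases mul_eq_zero.1 this with h'' | h''
        · linarith
        · exact h''
      · intro h'
        rw [h']
        ring
  · simp only [gmapSet_inr a ha0 halast hmono _ c, true_iff]
    exact tight2_inr a hs c
end Spec6
noncomputable section Spec7
variable {n k : ℕ} (x : Fin n → ℝ) (a : Fin (k + 1) → ℕ)

lemma gmapSet_spec_mid (ha0 : a 0 = 0) (halast : a (Fin.last k) = n) (hmono : StrictMono a)
    (S : Set (Fin n ⊕ Fin n)) (i : Fin k) (v : Fin (a i.succ - a i.castSucc + 1))
    (hv : (v : ℕ) < a i.succ - a i.castSucc) (m : Fin n)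
    (hm : (m : ℕ) = a i.castSucc + (v : ℕ)) :
    Sum.inl (⟨i, v⟩ : Σ i : Fin k, Fin (a i.succ - a i.castSucc + 1)) ∈
      gmapSet a ha0 halast hmono S ↔ Sum.inl m ∈ S := by
  rw [gmapSet_inl]
  rw [dif_pos hv]
  have e : midIdx a halast hmono i (v : ℕ) hv = m := Fin.ext (by simp only [midIdx]; omega)
  rw [e]

lemma gmapSet_spec_end (ha0 : a 0 = 0) (halast : a (Fin.last k) = n) (hmono : StrictMono a)
    (S : Set (Fin n ⊕ Fin n)) (i : Fin k) (v : Fin (a i.succ - a i.castSucc + 1))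
    (hv : ¬ (v : ℕ) < a i.succ - a i.castSucc) :
    Sum.inl (⟨i, v⟩ : Σ i : Fin k, Fin (a i.succ - a i.castSucc + 1)) ∈
      gmapSet a ha0 halast hmono S ↔ Sum.inr (endIdx a ha0 halast hmono i) ∈ S := by
  rw [gmapSet_inl]
  rw [dif_neg hv]

lemma transfer_inl (ha0 : a 0 = 0) (halast : a (Fin.last k) = n) (hmono : StrictMono a)
    {S S' : Set (Fin n ⊕ Fin n)}
    (h : gmapSet a ha0 halast hmono S ⊆ gmapSet a ha0 halast hmono S')
    (m : Fin n) (hm : Sum.inl m ∈ S) : Sum.inl m ∈ S' := by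
  obtain ⟨h1, h2⟩ := blk_spec a ha0 halast hmono m
  set i := blk a ha0 halast hmono m with hidef
  set v : Fin (a i.succ - a i.castSucc + 1) :=
    ⟨(m : ℕ) - a i.castSucc, Nat.lt_succ_of_le (by omega)⟩ with hvdef
  have hv : (v : ℕ) < a i.succ - a i.castSucc := by
    rw [hvdef]
    simp only [Fin.val_mk]
    omega
  have hmv : (m : ℕ) = a i.castSucc + (v : ℕ) := by
    rw [hvdef]
    simp only [Fin.val_mk]
    omega
  have e1 := gmapSet_spec_mid a ha0 halast hmono S i v hv m hmv
  have e2 := gmapSet_spec_mid a ha0 halast hmono S' i v hv m hmv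
  exact e2.1 (h (e1.2 hm))

lemma gmap_subset (hx : ∀ i, 0 ≤ x i) (ha0 : a 0 = 0) (halast : a (Fin.last k) = n)
    (hmono : StrictMono a)
    (hblock : ∀ m : Fin n, 0 < x m ↔ ∃ i : Fin k, (m : ℕ) = a i.castSucc)
    {y y' : Fin n → ℝ} (hy : y ∈ gpoly (L1 n) (B1 x)) (hy' : y' ∈ gpoly (L1 n) (B1 x))
    (h : gmapSet a ha0 halast hmono (gtight (L1 n) (B1 x) y) ⊆
      gmapSet a ha0 halast hmono (gtight (L1 n) (B1 x) y')) :
    gtight (L1 n) (B1 x) y ⊆ gtight (L1 n) (B1 x) y' := by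
  intro c hc
  rcases c with m | m
  · exact transfer_inl a ha0 halast hmono h m hc
  · obtain ⟨h1, h2⟩ := blk_spec a ha0 halast hmono m
    set i := blk a ha0 halast hmono m with hidef
    obtain ⟨hend, hzeros⟩ :=
      (tight1_struct x a hx ha0 halast hmono hblock hy m i h1 h2).1 hc
    have hlt := a_lt a hmono i
    set v : Fin (a i.succ - a i.castSucc + 1) :=
      ⟨a i.succ - a i.castSucc, by omega⟩ with hvdef
    have hv : ¬ (v : ℕ) < a i.succ - a i.castSucc := by
      rw [hvdef]
      simp
    have eE1 := gmapSet_spec_end a ha0 halast hmono (gtight (L1 n) (B1 x) y) i v hv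
    have eE2 := gmapSet_spec_end a ha0 halast hmono (gtight (L1 n) (B1 x) y') i v hv
    have hend' : Sum.inr (endIdx a ha0 halast hmono i) ∈ gtight (L1 n) (B1 x) y' :=
      eE2.1 (h (eE1.2 hend))
    have hzeros' : ∀ j : Fin n, (m : ℕ) < (j : ℕ) → (j : ℕ) < a i.succ → y' j = 0 := by
      intro j hj1 hj2
      have hjt : Sum.inl j ∈ gtight (L1 n) (B1 x) y :=
        (tight1_inl x j).2 (hzeros j hj1 hj2)
      exact (tight1_inl x j).1 (transfer_inl a ha0 halast hmono h j hjt)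
    exact (tight1_struct x a hx ha0 halast hmono hblock hy' m i h1 h2).2 ⟨hend', hzeros'⟩

def cMap (hx : ∀ i, 0 ≤ x i) (ha0 : a 0 = 0) (halast : a (Fin.last k) = n)
    (hmono : StrictMono a)
    (hblock : ∀ m : Fin n, 0 < x m ↔ ∃ i : Fin k, (m : ℕ) = a i.castSucc) :
    {S : Set (Fin n ⊕ Fin n) // ∃ y ∈ gpoly (L1 n) (B1 x), gtight (L1 n) (B1 x) y = S} →
    {T : Set ((Σ i : Fin k, Fin (a i.succ - a i.castSucc + 1)) ⊕ (Fin k ⊕ Fin k)) //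
      ∃ s ∈ gpoly (L2 a) (B2 a), gtight (L2 a) (B2 a) s = T} :=
  fun S => ⟨gmapSet a ha0 halast hmono S.1, by
    obtain ⟨y, hy, hty⟩ := S.2
    exact ⟨sMap x a halast hmono y, sMap_mem x a hx halast hmono hblock hy, by
      rw [sMap_tight x a hx ha0 halast hmono hblock hy, hty]⟩⟩

lemma cMap_le_iff (hx : ∀ i, 0 ≤ x i) (ha0 : a 0 = 0) (halast : a (Fin.last k) = n)
    (hmono : StrictMono a)
    (hblock : ∀ m : Fin n, 0 < x m ↔ ∃ i : Fin k, (m : ℕ) = a i.castSucc)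
    (S S' : {S : Set (Fin n ⊕ Fin n) //
      ∃ y ∈ gpoly (L1 n) (B1 x), gtight (L1 n) (B1 x) y = S}) :
    cMap x a hx ha0 halast hmono hblock S ≤ cMap x a hx ha0 halast hmono hblock S' ↔
      S ≤ S' := by
  constructor
  · intro h
    obtain ⟨y, hy, hty⟩ := S.2
    obtain ⟨y', hy', hty'⟩ := S'.2
    show S.1 ⊆ S'.1
    rw [← hty, ← hty']
    apply gmap_subset x a hx ha0 halast hmono hblock hy hy'
    have h' : gmapSet a ha0 halast hmono S.1 ⊆ gmapSet a ha0 halast hmono S'.1 := h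
    rw [← hty, ← hty'] at h'
    exact h'
  · intro h
    exact gmapSet_mono a ha0 halast hmono h

lemma cMap_surj (hx : ∀ i, 0 ≤ x i) (ha0 : a 0 = 0) (halast : a (Fin.last k) = n)
    (hmono : StrictMono a)
    (hblock : ∀ m : Fin n, 0 < x m ↔ ∃ i : Fin k, (m : ℕ) = a i.castSucc) :
    Function.Surjective (cMap x a hx ha0 halast hmono hblock) := by
  rintro ⟨T, hT⟩
  obtain ⟨s, hsP, hst⟩ := hT
  refine ⟨⟨gtight (L1 n) (B1 x) (yMap x a ha0 halast hmono s),
    ⟨yMap x a ha0 halast hmono s, yMap_mem x a hx ha0 halast hmono hblock hsP, rfl⟩⟩, ?_⟩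
  apply Subtype.ext
  show gmapSet a ha0 halast hmono (gtight (L1 n) (B1 x) (yMap x a ha0 halast hmono s)) = T
  rw [yMap_tight x a hx ha0 halast hmono hblock hsP, hst]

def cIso (hx : ∀ i, 0 ≤ x i) (ha0 : a 0 = 0) (halast : a (Fin.last k) = n)
    (hmono : StrictMono a)
    (hblock : ∀ m : Fin n, 0 < x m ↔ ∃ i : Fin k, (m : ℕ) = a i.castSucc) :
    {S : Set (Fin n ⊕ Fin n) // ∃ y ∈ gpoly (L1 n) (B1 x), gtight (L1 n) (B1 x) y = S} ≃o
    {T : Set ((Σ i : Fin k, Fin (a i.succ - a i.castSucc + 1)) ⊕ (Fin k ⊕ Fin k)) //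
      ∃ s ∈ gpoly (L2 a) (B2 a), gtight (L2 a) (B2 a) s = T} := by
  have hinj : Function.Injective (cMap x a hx ha0 halast hmono hblock) := by
    intro S S' h
    exact le_antisymm
      ((cMap_le_iff x a hx ha0 halast hmono hblock S S').1 h.le)
      ((cMap_le_iff x a hx ha0 halast hmono hblock S' S).1 h.ge)
  exact RelIso.mk
    (Equiv.ofBijective _ ⟨hinj, cMap_surj x a hx ha0 halast hmono hblock⟩)
    (fun {S S'} => cMap_le_iff x a hx ha0 halast hmono hblock S S')

end Spec7

open Finset in
/-- Suppose `x_1 > 0` and the partial sums `u_i = x_1+⋯+x_i` have blocks of equal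
values delimited by `0 = a_0 < a_1 < ⋯ < a_k = n` (so, with 0-based indexing,
`x_m > 0` exactly when `m` is one of the `a_i`, `i < k`).  Then `Π_n(x)` is
combinatorially equivalent (isomorphic face lattices, faces being the convex extreme
subsets ordered by inclusion) to the product of simplices
`σ_{b_1} × ⋯ × σ_{b_k}` with `b_i = a_i - a_{i-1}`. -/
theorem pi_polytope_comb_equiv_product_of_simplices
    (n k : ℕ) (hn : 0 < n) (x : Fin n → ℝ) (hx : ∀ i, 0 ≤ x i)
    (hx1 : ∀ i : Fin n, (i : ℕ) = 0 → 0 < x i)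
    (a : Fin (k + 1) → ℕ) (ha0 : a 0 = 0) (halast : a (Fin.last k) = n)
    (hmono : StrictMono a)
    (hblock : ∀ m : Fin n, 0 < x m ↔ ∃ i : Fin k, (m : ℕ) = a i.castSucc) :
    Nonempty
      ({F : Set (Fin n → ℝ) // Convex ℝ F ∧
          IsExtreme ℝ {y : Fin n → ℝ | ∀ i : Fin n, 0 ≤ y i ∧
            ∑ j ∈ Finset.Iic i, y j ≤ ∑ j ∈ Finset.Iic i, x j} F}
        ≃o
       {G : Set ((i : Fin k) → (Fin (a i.succ - a i.castSucc + 1) → ℝ)) //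
          Convex ℝ G ∧
          IsExtreme ℝ
            (Set.univ.pi fun i : Fin k => stdSimplex ℝ (Fin (a i.succ - a i.castSucc + 1)))
            G}) := by
  rw [hset1 x, hset2 a]
  exact ⟨(gfacesOrderIso (L1 n) (B1 x)).trans
    ((OrderIso.withBotCongr
      (OrderIso.dual (cIso x a hx ha0 halast hmono hblock))).trans
      (gfacesOrderIso (L2 a) (B2 a)).symm)⟩
end
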